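/- arXiv:1609.00476 — 9 statements merged into one kernel-verified Lean document; each statement's English description precedes it below -/
import Mathlib

section
/- Let G be a finite group. Then csd(G) = 1 if and only if sd(G) = 1; equivalently, every two cyclic subgroups of G permute (HK = KH for all cyclic H, K ≤ G) if and only if every two subgroups of G permute (HK = KH for all H, K ≤ G). -/
open Pointwise

/-- The cyclic subgroup commutativity degree of a group `G`. -/
noncomputable def csd (G : Type*) [Group G] : ℚ :=
  (Nat.card {pr : Subgroup G × Subgroup G //
      IsCyclic ↥pr.1 ∧ IsCyclic ↥pr.2 ∧
      (pr.1 : Set G) * (pr.2 : Set G) = (pr.2 : Set G) * (pr.1 : Set G)} : ℚ) /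
  (Nat.card {H : Subgroup G // IsCyclic ↥H} : ℚ) ^ 2

/-- The subgroup commutativity degree of a group `G`. -/
noncomputable def sd (G : Type*) [Group G] : ℚ :=
  (Nat.card {pr : Subgroup G × Subgroup G //
      (pr.1 : Set G) * (pr.2 : Set G) = (pr.2 : Set G) * (pr.1 : Set G)} : ℚ) /
  (Nat.card (Subgroup G) : ℚ) ^ 2

/-! The element `y * x` with `x ∈ H`, `y ∈ K` lies in `⟨y⟩⟨x⟩`; if cyclic subgroups permute, this
equals `⟨x⟩⟨y⟩ ⊆ HK`, so `KH ⊆ HK` for all subgroups `H, K`, and by symmetry `HK = KH`. Both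
commutativity degrees are ratios of a number of permuting pairs to the number of all pairs, so
each equals `1` exactly when all the pairs it counts permute. -/

theorem Finite.card_subtype_eq_card_iff {α : Type*} [Finite α] {p : α → Prop} :
    Nat.card {x // p x} = Nat.card α ↔ ∀ x, p x := by
  refine ⟨fun h x => ?_, fun h => Nat.card_congr (Equiv.subtypeUnivEquiv h)⟩
  by_contra hx
  exact (Finite.card_subtype_lt hx).ne h

theorem card_subtype_prod_div_card_sq_eq_one_iff {α K : Type*} [Finite α] [Nonempty α]
    [DivisionRing K] [CharZero K] (r : α → α → Prop) :
    (Nat.card {p : α × α // r p.1 p.2} : K) / (Nat.card α : K) ^ 2 = 1 ↔ ∀ a b, r a b := by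
  rw [div_eq_one_iff_eq (pow_ne_zero _ (Nat.cast_ne_zero.2 Nat.card_pos.ne')), sq,
    ← Nat.cast_mul, ← Nat.card_prod, Nat.cast_inj, Finite.card_subtype_eq_card_iff, Prod.forall]

namespace Subgroup

variable {G : Type*} [Group G]

theorem coe_mul_subset_of_forall_zpowers {H K : Subgroup G}
    (h : ∀ x ∈ H, ∀ y ∈ K,
      (zpowers y : Set G) * (zpowers x : Set G) ⊆ (zpowers x : Set G) * (zpowers y : Set G)) :
    (K : Set G) * (H : Set G) ⊆ (H : Set G) * (K : Set G) :=
  Set.mul_subset_iff.2 fun y hy x hx =>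
    Set.mul_subset_mul (zpowers_le.2 hx) (zpowers_le.2 hy)
      (h x hx y hy (Set.mul_mem_mul (mem_zpowers y) (mem_zpowers x)))

theorem coe_mul_comm_of_forall_zpowers {H K : Subgroup G}
    (h : ∀ x ∈ H, ∀ y ∈ K,
      (zpowers x : Set G) * (zpowers y : Set G) = (zpowers y : Set G) * (zpowers x : Set G)) :
    (H : Set G) * (K : Set G) = (K : Set G) * (H : Set G) :=
  (coe_mul_subset_of_forall_zpowers fun x hx y hy => (h x hx y hy).ge).antisymm'
    (coe_mul_subset_of_forall_zpowers fun y hy x hx => (h x hx y hy).le)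

theorem forall_isCyclic_coe_mul_comm_iff :
    (∀ H K : Subgroup G, IsCyclic H → IsCyclic K →
        (H : Set G) * (K : Set G) = (K : Set G) * (H : Set G)) ↔
      ∀ H K : Subgroup G, (H : Set G) * (K : Set G) = (K : Set G) * (H : Set G) :=
  ⟨fun h _ _ => coe_mul_comm_of_forall_zpowers fun _ _ _ _ => h _ _ inferInstance inferInstance,
    fun h H K _ _ => h H K⟩

end Subgroup

section CommutativityDegree

variable (G : Type*) [Group G] [Finite G]

theorem sd_eq_one_iff :
    sd G = 1 ↔ ∀ H K : Subgroup G, (H : Set G) * (K : Set G) = (K : Set G) * (H : Set G) :=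
  card_subtype_prod_div_card_sq_eq_one_iff fun H K : Subgroup G => (H : Set G) * K = K * H

theorem csd_eq_one_iff :
    csd G = 1 ↔ ∀ H K : Subgroup G, IsCyclic H → IsCyclic K →
      (H : Set G) * (K : Set G) = (K : Set G) * (H : Set G) := by
  let e : {pr : Subgroup G × Subgroup G // IsCyclic pr.1 ∧ IsCyclic pr.2 ∧
        (pr.1 : Set G) * (pr.2 : Set G) = (pr.2 : Set G) * (pr.1 : Set G)} ≃
      {p : {H : Subgroup G // IsCyclic H} × {H : Subgroup G // IsCyclic H} //
        (p.1.1 : Set G) * (p.2.1 : Set G) = (p.2.1 : Set G) * (p.1.1 : Set G)} :=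
    { toFun x := ⟨(⟨x.1.1, x.2.1⟩, ⟨x.1.2, x.2.2.1⟩), x.2.2.2⟩
      invFun p := ⟨(p.1.1.1, p.1.2.1), p.1.1.2, p.1.2.2, p.2⟩ }
  have : Nonempty {H : Subgroup G // IsCyclic H} := ⟨⟨⊥, inferInstance⟩⟩
  rw [csd, Nat.card_congr e, card_subtype_prod_div_card_sq_eq_one_iff
    fun H K : {H : Subgroup G // IsCyclic H} => (H : Set G) * (K : Set G) = K * H]
  exact ⟨fun h H K hH hK => h ⟨H, hH⟩ ⟨K, hK⟩, fun h H K => h H K H.2 K.2⟩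

end CommutativityDegree

theorem stmt_0 (G : Type*) [Group G] [Fintype G] :
    (csd G = 1 ↔ sd G = 1) ∧
    ((∀ H K : Subgroup G, IsCyclic ↥H → IsCyclic ↥K →
        (H : Set G) * (K : Set G) = (K : Set G) * (H : Set G)) ↔
      (∀ H K : Subgroup G, (H : Set G) * (K : Set G) = (K : Set G) * (H : Set G))) := by
  refine ⟨?_, Subgroup.forall_isCyclic_coe_mul_comm_iff⟩
  rw [csd_eq_one_iff, sd_eq_one_iff]
  exact Subgroup.forall_isCyclic_coe_mul_comm_iff
end

section
/- Let G be a finite group and M a subgroup of G. Then csd(G) ≥ (|L₁(M)| / |L₁(G)|)² · csd(M). In particular, if M is abelian then csd(G) ≥ (|L₁(M)| / |L₁(G)|)². -/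
open Pointwise

/-!
An injective homomorphism `f : H →* G` maps cyclic subgroups of `H` injectively to cyclic
subgroups of `G`, and permuting pairs to permuting pairs. Hence `G` has at least as many
permuting pairs of cyclic subgroups as `H`, and dividing by `|L₁(G)|²` gives the bound.
In a commutative group every pair of subgroups permutes, so `csd = 1`.
-/

abbrev CyclicSubgroup (G : Type*) [Group G] : Type _ :=
  {H : Subgroup G // IsCyclic H}

abbrev PermutingCyclicPair (G : Type*) [Group G] : Type _ :=
  {pr : Subgroup G × Subgroup G //
    IsCyclic pr.1 ∧ IsCyclic pr.2 ∧ (pr.1 : Set G) * pr.2 = pr.2 * pr.1}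

section

variable {G N : Type*} [Group G] [Group N]

lemma csd_eq :
    csd G = Nat.card (PermutingCyclicPair G) / (Nat.card (CyclicSubgroup G) : ℚ) ^ 2 :=
  rfl

lemma Subgroup.isCyclic_map (f : G →* N) (H : Subgroup G) [IsCyclic H] : IsCyclic (H.map f) :=
  isCyclic_of_surjective (f.subgroupMap H) (f.subgroupMap_surjective H)

lemma Subgroup.coe_map_mul_comm (f : G →* N) {H K : Subgroup G}
    (h : (H : Set G) * K = K * H) :
    (H.map f : Set N) * K.map f = K.map f * H.map f := by
  simp only [Subgroup.coe_map, ← Set.image_mul, h]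

def PermutingCyclicPair.map (f : G →* N) (p : PermutingCyclicPair G) : PermutingCyclicPair N :=
  have := p.2.1
  have := p.2.2.1
  ⟨(p.1.1.map f, p.1.2.map f),
    Subgroup.isCyclic_map f _, Subgroup.isCyclic_map f _, Subgroup.coe_map_mul_comm f p.2.2.2⟩

lemma PermutingCyclicPair.map_injective {f : G →* N} (hf : Function.Injective f) :
    Function.Injective (PermutingCyclicPair.map f) := by
  rintro ⟨⟨H₁, K₁⟩, _⟩ ⟨⟨H₂, K₂⟩, _⟩ h
  simp only [PermutingCyclicPair.map, Subtype.mk.injEq, Prod.mk.injEq] at h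
  simp [Subgroup.map_injective hf h.1, Subgroup.map_injective hf h.2]

instance [Finite (CyclicSubgroup G)] : Finite (PermutingCyclicPair G) :=
  Finite.of_injective
    (fun p => ((⟨p.1.1, p.2.1⟩, ⟨p.1.2, p.2.2.1⟩) : CyclicSubgroup G × CyclicSubgroup G))
    (by rintro ⟨⟨H₁, K₁⟩, _⟩ ⟨⟨H₂, K₂⟩, _⟩ h; simp_all)

lemma card_permutingCyclicPair_le [Finite (CyclicSubgroup N)] {f : G →* N}
    (hf : Function.Injective f) :
    Nat.card (PermutingCyclicPair G) ≤ Nat.card (PermutingCyclicPair N) :=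
  Nat.card_le_card_of_injective _ (PermutingCyclicPair.map_injective hf)

lemma csd_nonneg : 0 ≤ csd G := by
  rw [csd_eq]
  positivity

lemma csd_le_of_injective {f : G →* N} (hf : Function.Injective f) :
    ((Nat.card (CyclicSubgroup G) : ℚ) / Nat.card (CyclicSubgroup N)) ^ 2 * csd G ≤ csd N := by
  -- `Nat.card` of an infinite type is `0`, which makes the left side vanish.
  rcases eq_or_ne (Nat.card (CyclicSubgroup N)) 0 with hN | hN
  · simpa [hN] using csd_nonneg
  rcases eq_or_ne (Nat.card (CyclicSubgroup G)) 0 with hG | hG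
  · simpa [hG] using csd_nonneg
  have : Finite (CyclicSubgroup N) := Nat.finite_of_card_ne_zero hN
  have hle : (Nat.card (PermutingCyclicPair G) : ℚ) ≤ Nat.card (PermutingCyclicPair N) := by
    exact_mod_cast card_permutingCyclicPair_le hf
  calc ((Nat.card (CyclicSubgroup G) : ℚ) / Nat.card (CyclicSubgroup N)) ^ 2 * csd G
      = Nat.card (PermutingCyclicPair G) / (Nat.card (CyclicSubgroup N) : ℚ) ^ 2 := by
        rw [csd_eq]
        field_simp
    _ ≤ csd N := by
        rw [csd_eq]
        gcongr

lemma card_permutingCyclicPair_of_comm (hG : ∀ a b : G, a * b = b * a) :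
    Nat.card (PermutingCyclicPair G) = Nat.card (CyclicSubgroup G) ^ 2 := by
  have hcomm (s t : Set G) : s * t = t * s := by
    ext x
    simp only [Set.mem_mul]
    constructor <;> rintro ⟨a, ha, b, hb, rfl⟩ <;> exact ⟨b, hb, a, ha, hG b a⟩
  rw [sq, ← Nat.card_prod]
  exact Nat.card_congr
    { toFun := fun p => (⟨p.1.1, p.2.1⟩, ⟨p.1.2, p.2.2.1⟩)
      invFun := fun q => ⟨(q.1.1, q.2.1), q.1.2, q.2.2, hcomm _ _⟩
      left_inv := fun _ => rfl
      right_inv := fun _ => rfl }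

lemma csd_eq_one_of_comm (hG : ∀ a b : G, a * b = b * a)
    (hc : Nat.card (CyclicSubgroup G) ≠ 0) : csd G = 1 := by
  rw [csd_eq, card_permutingCyclicPair_of_comm hG]
  push_cast
  exact div_self (by positivity)

end

theorem stmt_3_general (G : Type*) [Group G] (M : Subgroup G) :
    csd G ≥ ((Nat.card {H : Subgroup ↥M // IsCyclic ↥H} : ℚ) /
        (Nat.card {H : Subgroup G // IsCyclic ↥H} : ℚ)) ^ 2 * csd ↥M ∧
    ((∀ a b : ↥M, a * b = b * a) →
      csd G ≥ ((Nat.card {H : Subgroup ↥M // IsCyclic ↥H} : ℚ) /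
        (Nat.card {H : Subgroup G // IsCyclic ↥H} : ℚ)) ^ 2) := by
  have key := csd_le_of_injective M.subtype_injective
  refine ⟨key, fun hM => ?_⟩
  rcases eq_or_ne (Nat.card (CyclicSubgroup M)) 0 with h0 | h0
  · simpa [h0] using key
  · simpa [csd_eq_one_of_comm hM h0] using key

theorem stmt_3 (G : Type*) [Group G] [Fintype G] (M : Subgroup G) :
    csd G ≥ ((Nat.card {H : Subgroup ↥M // IsCyclic ↥H} : ℚ) /
        (Nat.card {H : Subgroup G // IsCyclic ↥H} : ℚ)) ^ 2 * csd ↥M ∧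
    ((∀ a b : ↥M, a * b = b * a) →
      csd G ≥ ((Nat.card {H : Subgroup ↥M // IsCyclic ↥H} : ℚ) /
        (Nat.card {H : Subgroup G // IsCyclic ↥H} : ℚ)) ^ 2) :=
  stmt_3_general G M
end

section
/- Let G₁, ..., G_k be finite groups whose orders are pairwise coprime. Then csd(G₁ × ⋯ × G_k) = csd(G₁) · csd(G₂) ⋯ csd(G_k). -/
open Pointwise

/-!
When the orders of the `Gᵢ` are pairwise coprime, every subgroup `H` of `∏ Gᵢ` is the product of
its projections `Hᵢ`: if `g ∈ H`, raising `g` to the product `N` of the orders of the other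
factors kills all coordinates but the `i`-th, and `g i` is a power of `g i ^ N` since `N` is prime
to its order. Hence `H ↦ (Hᵢ)ᵢ` is a bijection between subgroups of the product and families of
subgroups of the factors. Under it `H` is cyclic iff every `Hᵢ` is (generated by `(aᵢ)ᵢ` when
`Hᵢ = ⟨aᵢ⟩`), and `HK = KH` iff `HᵢKᵢ = KᵢHᵢ` for all `i`, because the product of two products
of sets is computed coordinatewise. So both the numerator and the denominator of `csd` are
multiplicative.
-/

namespace Set

variable {ι : Type*} {α : ι → Type*}

theorem univ_pi_mul_univ_pi [∀ i, Mul (α i)] (s t : ∀ i, Set (α i)) :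
    pi univ s * pi univ t = pi univ fun i => s i * t i := by
  ext x
  constructor
  · rintro ⟨a, ha, b, hb, rfl⟩ i _
    exact ⟨a i, ha i trivial, b i, hb i trivial, rfl⟩
  · intro hx
    choose a ha b hb hab using fun i => hx i trivial
    exact ⟨a, fun i _ => ha i, b, fun i _ => hb i, funext hab⟩

theorem univ_pi_eq_univ_pi_iff {s t : ∀ i, Set (α i)} (hs : ∀ i, (s i).Nonempty) :
    pi univ s = pi univ t ↔ s = t := by
  refine ⟨fun h => funext fun i => ?_, fun h => h ▸ rfl⟩
  have hs' : (pi univ s).Nonempty := univ_pi_nonempty_iff.2 hs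
  rw [← eval_image_univ_pi hs', h, eval_image_univ_pi (h ▸ hs')]

end Set

namespace Subgroup

variable {ι : Type*} {G : ι → Type*} [∀ i, Group (G i)]

theorem mulSingle_mem_of_pairwise_coprime [Fintype ι] [DecidableEq ι]
    (hcop : Pairwise fun i j => (Nat.card (G i)).Coprime (Nat.card (G j)))
    {H : Subgroup (∀ i, G i)} {g : ∀ i, G i} (hg : g ∈ H) (i : ι) :
    Pi.mulSingle i (g i) ∈ H := by
  set N := ∏ j ∈ Finset.univ.erase i, Nat.card (G j)
  have hg_pow : g ^ N = Pi.mulSingle i (g i ^ N) := by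
    funext j
    rcases eq_or_ne j i with rfl | hji
    · simp
    · have hdvd : Nat.card (G j) ∣ N := Finset.dvd_prod_of_mem _ (by simp [hji])
      rw [Pi.pow_apply, Pi.mulSingle_eq_of_ne hji,
        orderOf_dvd_iff_pow_eq_one.mp ((_root_.orderOf_dvd_natCard _).trans hdvd)]
  have hN : N.Coprime (orderOf (g i)) :=
    (Nat.Coprime.prod_left fun j hj => hcop (Finset.ne_of_mem_erase hj)).coprime_dvd_right
      (_root_.orderOf_dvd_natCard _)
  obtain ⟨m, hm⟩ := exists_pow_eq_self_of_coprime hN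
  rw [← hm, Pi.mulSingle_pow, ← hg_pow]
  exact H.pow_mem (H.pow_mem hg N) m

theorem pi_map_evalMonoidHom_of_pairwise_coprime [Finite ι]
    (hcop : Pairwise fun i j => (Nat.card (G i)).Coprime (Nat.card (G j)))
    (H : Subgroup (∀ i, G i)) :
    pi Set.univ (fun i => H.map (Pi.evalMonoidHom G i)) = H := by
  classical
  have := Fintype.ofFinite ι
  refine le_antisymm (fun x hx => pi_mem_of_mulSingle_mem x fun i => ?_)
    fun x hx i _ => ⟨x, hx, rfl⟩
  obtain ⟨g, hg, hgi⟩ := hx i trivial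
  exact hgi ▸ mulSingle_mem_of_pairwise_coprime hcop hg i

theorem map_evalMonoidHom_pi (A : ∀ i, Subgroup (G i)) (i : ι) :
    (pi Set.univ A).map (Pi.evalMonoidHom G i) = A i := by
  classical
  refine le_antisymm (map_le_iff_le_comap.2 fun x hx => hx i trivial) fun x hx => ?_
  exact ⟨Pi.mulSingle i x, (mulSingle_mem_pi i x).2 fun _ => hx, Pi.mulSingle_eq_same i x⟩

def piEquivOfPairwiseCoprime [Finite ι]
    (hcop : Pairwise fun i j => (Nat.card (G i)).Coprime (Nat.card (G j))) :
    Subgroup (∀ i, G i) ≃ ∀ i, Subgroup (G i) where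
  toFun H i := H.map (Pi.evalMonoidHom G i)
  invFun A := pi Set.univ A
  left_inv := pi_map_evalMonoidHom_of_pairwise_coprime hcop
  right_inv A := funext (map_evalMonoidHom_pi A)

theorem isCyclic_iff_of_pairwise_coprime [Finite ι]
    (hcop : Pairwise fun i j => (Nat.card (G i)).Coprime (Nat.card (G j)))
    (H : Subgroup (∀ i, G i)) :
    IsCyclic H ↔ ∀ i, IsCyclic (piEquivOfPairwiseCoprime hcop H i) := by
  have map_zpowers (g : ∀ i, G i) :
      piEquivOfPairwiseCoprime hcop (zpowers g) = fun i => zpowers (g i) :=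
    funext fun i => MonoidHom.map_zpowers _ g
  simp only [Subgroup.isCyclic_iff_exists_zpowers_eq_top]
  constructor
  · rintro ⟨g, rfl⟩ i
    exact ⟨g i, congrFun (map_zpowers g).symm i⟩
  · intro h
    choose a ha using h
    refine ⟨a, (piEquivOfPairwiseCoprime hcop).injective ?_⟩
    rw [map_zpowers]
    exact funext ha

theorem coe_pi_mul_comm_iff (A B : ∀ i, Subgroup (G i)) :
    (pi Set.univ A : Set (∀ i, G i)) * pi Set.univ B = pi Set.univ B * pi Set.univ A ↔
      ∀ i, (A i : Set (G i)) * B i = B i * A i := by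
  rw [coe_pi, coe_pi, Set.univ_pi_mul_univ_pi, Set.univ_pi_mul_univ_pi]
  have hne i : ((A i : Set (G i)) * B i).Nonempty :=
    (OneMemClass.coe_nonempty (A i)).mul (OneMemClass.coe_nonempty (B i))
  exact (Set.univ_pi_eq_univ_pi_iff hne).trans funext_iff

end Subgroup

def IsPermutingCyclicPair {G : Type*} [Group G] (p : Subgroup G × Subgroup G) : Prop :=
  IsCyclic p.1 ∧ IsCyclic p.2 ∧ (p.1 : Set G) * p.2 = p.2 * p.1

theorem csd_eq_s4 (G : Type*) [Group G] :
    csd G = (Nat.card {p : Subgroup G × Subgroup G // IsPermutingCyclicPair p} : ℚ) /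
      (Nat.card {H : Subgroup G // IsCyclic H} : ℚ) ^ 2 :=
  rfl

section Counting

open Subgroup

variable {ι : Type*} {G : ι → Type*} [∀ i, Group (G i)]

theorem isPermutingCyclicPair_iff_of_pairwise_coprime [Finite ι]
    (hcop : Pairwise fun i j => (Nat.card (G i)).Coprime (Nat.card (G j)))
    (p : Subgroup (∀ i, G i) × Subgroup (∀ i, G i)) :
    IsPermutingCyclicPair p ↔ ∀ i, IsPermutingCyclicPair
      (piEquivOfPairwiseCoprime hcop p.1 i, piEquivOfPairwiseCoprime hcop p.2 i) := by
  obtain ⟨H, K⟩ := p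
  have hH : pi Set.univ (piEquivOfPairwiseCoprime hcop H) = H :=
    pi_map_evalMonoidHom_of_pairwise_coprime hcop H
  have hK : pi Set.univ (piEquivOfPairwiseCoprime hcop K) = K :=
    pi_map_evalMonoidHom_of_pairwise_coprime hcop K
  simp only [IsPermutingCyclicPair, forall_and, isCyclic_iff_of_pairwise_coprime hcop]
  rw [← coe_pi_mul_comm_iff, hH, hK]

theorem card_cyclicSubgroups_pi [Fintype ι]
    (hcop : Pairwise fun i j => (Nat.card (G i)).Coprime (Nat.card (G j))) :
    Nat.card {H : Subgroup (∀ i, G i) // IsCyclic H} =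
      ∏ i, Nat.card {H : Subgroup (G i) // IsCyclic H} := by
  rw [← Nat.card_pi]
  exact Nat.card_congr <|
    ((piEquivOfPairwiseCoprime hcop).subtypeEquiv
      (isCyclic_iff_of_pairwise_coprime hcop)).trans Equiv.subtypePiEquivPi

theorem card_permutingCyclicPairs_pi [Fintype ι]
    (hcop : Pairwise fun i j => (Nat.card (G i)).Coprime (Nat.card (G j))) :
    Nat.card {p : Subgroup (∀ i, G i) × Subgroup (∀ i, G i) // IsPermutingCyclicPair p} =
      ∏ i, Nat.card {p : Subgroup (G i) × Subgroup (G i) // IsPermutingCyclicPair p} := by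
  let e := piEquivOfPairwiseCoprime hcop
  rw [← Nat.card_pi]
  exact Nat.card_congr <|
    ((e.prodCongr e).trans (Equiv.arrowProdEquivProdArrow _ _ _).symm |>.subtypeEquiv
      (isPermutingCyclicPair_iff_of_pairwise_coprime hcop)).trans Equiv.subtypePiEquivPi

end Counting

theorem stmt_4_general (k : ℕ) (G : Fin k → Type*) [∀ i, Group (G i)]
    (hcop : ∀ i j, i ≠ j → Nat.Coprime (Nat.card (G i)) (Nat.card (G j))) :
    csd (∀ i, G i) = ∏ i, csd (G i) := by
  simp only [csd_eq_s4, card_permutingCyclicPairs_pi hcop, card_cyclicSubgroups_pi hcop,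
    Nat.cast_prod, Finset.prod_div_distrib, Finset.prod_pow]

theorem stmt_4 (k : ℕ) (G : Fin k → Type*) [∀ i, Group (G i)] [∀ i, Fintype (G i)]
    (hcop : ∀ i j, i ≠ j → Nat.Coprime (Nat.card (G i)) (Nat.card (G j))) :
    csd (∀ i, G i) = ∏ i, csd (G i) :=
  stmt_4_general k G hcop
end

section
/- Let p be an odd prime, n ≥ 2 an integer, q a prime dividing p − 1, and let G = G_{n,p} be the non-abelian P-group of order p^{n−1}q: G = M⟨x⟩, where M is elementary abelian of order p^{n−1}, x has order q, and there is an integer r with r ≢ 1 (mod p) such that x⁻¹yx = y^r for all y ∈ M. Then csd(G) = [(2 + p + p² + ⋯ + p^{n−2})(2 + p + p² + ⋯ + p^{n−1}) + p^{n−1}(3 + p + p² + ⋯ + p^{n−2})] / (2 + p + p² + ⋯ + p^{n−1})². -/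
/-!
Conjugation by `m * x ^ k` with `m ∈ M` acts on the abelian group `M` as `y ↦ y ^ r ^ k`, so every
subgroup of `M` is normal in `G` and permutes with every subgroup. Since `r` has order `q` modulo
`p`, an element centralizing a nontrivial element of `M` lies in `M`; applied to `g ^ q ∈ M` this
shows that every `g ∉ M` has order `q`. Hence the cyclic subgroups are `⊥`, the
`(p ^ (n - 1) - 1) / (p - 1)` subgroups of order `p` of `M` and the `p ^ (n - 1)` subgroups of
order `q`, and the pairs that do not permute are exactly the `b² - b` ordered pairs of distinct
subgroups of order `q`, where `b = p ^ (n - 1)`.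
-/

open Pointwise

open Finset

section General

variable {G : Type*} [Group G]

theorem zpow_eq_self_iff (y : G) (e : ℤ) : y ^ e = y ↔ (e : ZMod (orderOf y)) = 1 := by
  have h := zpow_eq_zpow_iff_modEq (x := y) (m := e) (n := 1)
  rwa [zpow_one, ← ZMod.intCast_eq_intCast_iff, Int.cast_one] at h

theorem Subgroup.coe_sup_of_mul_comm {H K : Subgroup G} (hHK : (H : Set G) * K = K * H) :
    ((H ⊔ K : Subgroup G) : Set G) = H * K := by
  let S : Subgroup G :=
    { carrier := H * K
      one_mem' := ⟨1, H.one_mem, 1, K.one_mem, mul_one 1⟩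
      mul_mem' := by
        rintro _ _ ⟨h₁, hh₁, k₁, hk₁, rfl⟩ ⟨h₂, hh₂, k₂, hk₂, rfl⟩
        obtain ⟨h₃, hh₃, k₃, hk₃, he⟩ : k₁ * h₂ ∈ (H : Set G) * K :=
          hHK ▸ ⟨k₁, hk₁, h₂, hh₂, rfl⟩
        refine ⟨h₁ * h₃, H.mul_mem hh₁ hh₃, k₃ * k₂, K.mul_mem hk₃ hk₂, ?_⟩
        calc h₁ * h₃ * (k₃ * k₂) = h₁ * (h₃ * k₃) * k₂ := by group
          _ = h₁ * k₁ * (h₂ * k₂) := by rw [show h₃ * k₃ = k₁ * h₂ from he]; group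
      inv_mem' := by
        rintro _ ⟨h, hh, k, hk, rfl⟩
        rw [mul_inv_rev]
        exact hHK ▸ ⟨k⁻¹, K.inv_mem hk, h⁻¹, H.inv_mem hh, rfl⟩ }
  refine subset_antisymm (?_ : H ⊔ K ≤ S) ?_
  · exact sup_le (fun h hh => ⟨h, hh, 1, K.one_mem, mul_one h⟩)
      (fun k hk => ⟨1, H.one_mem, k, hk, one_mul k⟩)
  · rintro _ ⟨h, hh, k, hk, rfl⟩
    exact Subgroup.mul_mem_sup hh hk

/-- `HK` is a subgroup of order at most `q²` whose order divides `p ^ k * q`, and `q < p` leaves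
no room between `q` and `q²`. -/
theorem Subgroup.eq_of_mul_comm_of_card_eq [Finite G] {p q k : ℕ} (hp : p.Prime) (hqp : q < p)
    (hG : Nat.card G = p ^ k * q) {H K : Subgroup G} (hH : Nat.card H = q)
    (hK : Nat.card K = q) (hHK : (H : Set G) * K = K * H) : H = K := by
  have hS_le : Nat.card ↥(H ⊔ K) ≤ q * q := by
    calc Nat.card ↥(H ⊔ K) = Nat.card ↥((H : Set G) * K) := by
          rw [← Subgroup.coe_sup_of_mul_comm hHK]; rfl
      _ ≤ Nat.card (H : Set G) * Nat.card (K : Set G) := Set.natCard_mul_le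
      _ = q * q := congrArg₂ (· * ·) hH hK
  have hq : 0 < q := hH ▸ Nat.card_pos
  obtain ⟨d, hd⟩ : q ∣ Nat.card ↥(H ⊔ K) := hH ▸ Subgroup.card_dvd_of_le le_sup_left
  have hdp : d ∣ p ^ k := by
    refine (Nat.mul_dvd_mul_iff_left hq).mp ?_
    rw [← hd, mul_comm q, ← hG]
    exact Subgroup.card_subgroup_dvd_card _
  obtain ⟨j, -, rfl⟩ := (Nat.dvd_prime_pow hp).mp hdp
  have hj : j = 0 := by
    by_contra hj
    have := Nat.le_self_pow hj p
    nlinarith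
  have hsup : Nat.card ↥(H ⊔ K) = q := by rw [hd, hj, pow_zero, mul_one]
  exact (Subgroup.eq_of_le_of_card_ge le_sup_left (hsup.trans hH.symm).le).trans
    (Subgroup.eq_of_le_of_card_ge le_sup_right (hsup.trans hK.symm).le).symm

theorem Subgroup.zpowers_eq_iff_of_card_eq_prime [Finite G] {H : Subgroup G} {ℓ : ℕ}
    (hℓ : ℓ.Prime) (hH : Nat.card H = ℓ) {g : G} : Subgroup.zpowers g = H ↔ g ∈ H ∧ g ≠ 1 := by
  have := Fact.mk hℓ
  constructor
  · rintro rfl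
    refine ⟨Subgroup.mem_zpowers g, ?_⟩
    rintro rfl
    rw [Subgroup.zpowers_one_eq_bot, Subgroup.card_bot] at hH
    exact hℓ.one_lt.ne hH
  · rintro ⟨hgH, hg1⟩
    have hg : orderOf g = ℓ := orderOf_eq_prime
      (orderOf_dvd_iff_pow_eq_one.mp (hH ▸ Subgroup.orderOf_dvd_natCard H hgH)) hg1
    refine Subgroup.eq_of_le_of_card_ge (Subgroup.zpowers_le.mpr hgH) ?_
    rw [Nat.card_zpowers, hg, hH]

theorem ncard_setOf_orderOf_eq_prime [Finite G] (K : Subgroup G) {ℓ : ℕ} (hℓ : ℓ.Prime) :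
    {g : G | g ∈ K ∧ orderOf g = ℓ}.ncard =
      {H : Subgroup G | H ≤ K ∧ Nat.card H = ℓ}.ncard * (ℓ - 1) := by
  classical
  have := Fintype.ofFinite G
  set A : Finset G := {g | g ∈ K ∧ orderOf g = ℓ}
  set S : Finset (Subgroup G) := {H | H ≤ K ∧ Nat.card H = ℓ}
  have hmaps : Set.MapsTo Subgroup.zpowers (A : Set G) (S : Set (Subgroup G)) := fun g hg => by
    simp only [A, S, coe_filter, mem_univ, true_and, Set.mem_ofPred_eq] at hg ⊢
    exact ⟨Subgroup.zpowers_le.mpr hg.1, (Nat.card_zpowers g).trans hg.2⟩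
  have hfiber : ∀ H ∈ S, #{g ∈ A | Subgroup.zpowers g = H} = ℓ - 1 := by
    intro H hH
    simp only [S, mem_filter, mem_univ, true_and] at hH
    have hfib : {g ∈ A | Subgroup.zpowers g = H} = ({g | g ∈ H} : Finset G).erase 1 := by
      ext g
      simp only [A, mem_filter, mem_univ, true_and, mem_erase,
        Subgroup.zpowers_eq_iff_of_card_eq_prime hℓ hH.2]
      constructor
      · exact fun ⟨_, hgH, hg1⟩ => ⟨hg1, hgH⟩
      · rintro ⟨hg1, hgH⟩
        refine ⟨⟨hH.1 hgH, ?_⟩, hgH, hg1⟩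
        rw [← Nat.card_zpowers, (Subgroup.zpowers_eq_iff_of_card_eq_prime hℓ hH.2).mpr ⟨hgH, hg1⟩,
          hH.2]
    rw [hfib, card_erase_of_mem (by simp), ← hH.2, Nat.card_eq_fintype_card,
      Fintype.card_subtype]
  have hA : {g : G | g ∈ K ∧ orderOf g = ℓ}.ncard = #A := by
    rw [← Set.ncard_coe_finset]; simp [A]
  have hS : {H : Subgroup G | H ≤ K ∧ Nat.card H = ℓ}.ncard = #S := by
    rw [← Set.ncard_coe_finset]; simp [S]
  rw [hA, hS, card_eq_sum_card_fiberwise hmaps, sum_congr rfl hfiber, sum_const, smul_eq_mul]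

theorem csd_eq_of_mul_comm_iff [Finite G] (B : Set (Subgroup G)) (hB : ∀ H ∈ B, IsCyclic H)
    (hcomm : ∀ H K : Subgroup G, IsCyclic H → IsCyclic K →
      ((H : Set G) * K = K * H ↔ ¬ (H ∈ B ∧ K ∈ B ∧ H ≠ K))) :
    csd G = (({H : Subgroup G | IsCyclic H}.ncard : ℚ) ^ 2 - B.ncard ^ 2 + B.ncard) /
      {H : Subgroup G | IsCyclic H}.ncard ^ 2 := by
  classical
  have := Fintype.ofFinite G
  set C : Finset (Subgroup G) := {H | IsCyclic H}
  set Bf : Finset (Subgroup G) := {H | H ∈ B}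
  have hC : {H : Subgroup G | IsCyclic H}.ncard = #C := by
    rw [← Set.ncard_coe_finset]; simp [C]
  have hBf : B.ncard = #Bf := by
    rw [← Set.ncard_coe_finset]; simp [Bf]
  have hpairs : ({pr : Subgroup G × Subgroup G | IsCyclic pr.1 ∧ IsCyclic pr.2 ∧
      (pr.1 : Set G) * pr.2 = pr.2 * pr.1} : Finset _) = C ×ˢ C \ Bf.offDiag := by
    ext ⟨H, K⟩
    simp only [mem_filter, mem_univ, true_and, mem_sdiff, mem_product, mem_offDiag, C, Bf]
    constructor
    · rintro ⟨hH, hK, hHK⟩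
      exact ⟨⟨hH, hK⟩, (hcomm H K hH hK).mp hHK⟩
    · rintro ⟨⟨hH, hK⟩, hnot⟩
      exact ⟨hH, hK, (hcomm H K hH hK).mpr hnot⟩
  have hsub : Bf.offDiag ⊆ C ×ˢ C := fun pr hpr => by
    simp only [mem_offDiag, mem_product, C, Bf, mem_filter, mem_univ, true_and] at hpr ⊢
    exact ⟨hB _ hpr.1, hB _ hpr.2.1⟩
  have hcount := congrArg (Nat.cast : ℕ → ℚ) (card_sdiff_add_card_eq_card hsub)
  rw [card_product, offDiag_card] at hcount
  push_cast [Nat.cast_sub (Nat.le_mul_self #Bf)] at hcount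
  rw [csd, Nat.card_eq_fintype_card, Fintype.card_subtype, Nat.card_eq_fintype_card,
    Fintype.card_subtype, hpairs, hC, hBf]
  congr 1
  linear_combination hcount

end General

structure IsPowerSemidirect {G : Type*} [Group G] (M : Subgroup G) (x : G) (p q : ℕ) (r : ℤ) :
    Prop where
  normal : M.Normal
  comm : ∀ a ∈ M, ∀ b ∈ M, a * b = b * a
  pow_eq_one : ∀ y ∈ M, y ^ p = 1
  orderOf_eq : orderOf x = q
  sup_zpowers_eq_top : M ⊔ Subgroup.zpowers x = ⊤
  index_eq : M.index = q
  intCast_ne_one : (r : ZMod p) ≠ 1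
  conj_eq_zpow : ∀ y ∈ M, x⁻¹ * y * x = y ^ r

namespace IsPowerSemidirect

variable {G : Type*} [Group G] {M : Subgroup G} {x : G} {p q : ℕ} {r : ℤ}

theorem conj_pow_eq (h : IsPowerSemidirect M x p q r) (k : ℕ) {y : G} (hy : y ∈ M) :
    (x ^ k)⁻¹ * y * x ^ k = y ^ r ^ k := by
  induction k with
  | zero => simp
  | succ k ih =>
    calc (x ^ (k + 1))⁻¹ * y * x ^ (k + 1) = x⁻¹ * ((x ^ k)⁻¹ * y * x ^ k) * x := by group
      _ = (x⁻¹ * y * x) ^ r ^ k := by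
        rw [ih]; simpa using (conj_zpow (a := x⁻¹) (b := y) (i := r ^ k)).symm
      _ = y ^ r ^ (k + 1) := by rw [h.conj_eq_zpow y hy, ← zpow_mul, pow_succ']

theorem conj_mul_pow_eq (h : IsPowerSemidirect M x p q r) {m : G} (hm : m ∈ M) (k : ℕ) {y : G}
    (hy : y ∈ M) : (m * x ^ k)⁻¹ * y * (m * x ^ k) = y ^ r ^ k := by
  have hmy : m⁻¹ * y * m = y := by rw [mul_assoc, h.comm y hy m hm, inv_mul_cancel_left]
  calc (m * x ^ k)⁻¹ * y * (m * x ^ k) = (x ^ k)⁻¹ * (m⁻¹ * y * m) * x ^ k := by group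
    _ = y ^ r ^ k := by rw [hmy, h.conj_pow_eq k hy]

theorem exists_eq_mul_pow [Finite G] (h : IsPowerSemidirect M x p q r) (g : G) :
    ∃ m ∈ M, ∃ k : ℕ, g = m * x ^ k := by
  have := h.normal
  have hg : g ∈ ((M ⊔ Subgroup.zpowers x : Subgroup G) : Set G) := by
    rw [h.sup_zpowers_eq_top]; trivial
  rw [Subgroup.normal_mul] at hg
  obtain ⟨m, hm, _, hz, rfl⟩ := hg
  obtain ⟨k, rfl⟩ := mem_powers_iff_mem_zpowers.mpr hz
  exact ⟨m, hm, k, rfl⟩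

theorem normal_of_le [Finite G] (h : IsPowerSemidirect M x p q r) {H : Subgroup G}
    (hH : H ≤ M) : H.Normal := by
  refine ⟨fun y hy g => ?_⟩
  obtain ⟨m, hm, k, hg⟩ := h.exists_eq_mul_pow g⁻¹
  have hconj := h.conj_mul_pow_eq hm k (hH hy)
  rw [← hg, inv_inv] at hconj
  rw [hconj]
  exact H.zpow_mem hy _

theorem mul_comm_of_le [Finite G] (h : IsPowerSemidirect M x p q r) {H : Subgroup G}
    (hH : H ≤ M) (K : Subgroup G) : (H : Set G) * K = K * H :=
  have := h.normal_of_le hH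
  (Subgroup.set_mul_normal_comm K H).symm

theorem orderOf_intCast_eq (h : IsPowerSemidirect M x p q r) (hq : q.Prime) {y : G}
    (hy : y ∈ M) (hyp : orderOf y = p) : orderOf (r : ZMod p) = q := by
  have hfix : y ^ r ^ q = y := by
    rw [← h.conj_pow_eq q hy, ← h.orderOf_eq, pow_orderOf_eq_one]; group
  rw [zpow_eq_self_iff, hyp] at hfix
  push_cast at hfix
  exact ((Nat.dvd_prime hq).mp (orderOf_dvd_of_pow_eq_one hfix)).resolve_left
    fun h1 => h.intCast_ne_one (orderOf_eq_one_iff.mp h1)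

theorem mem_of_commute [Finite G] (h : IsPowerSemidirect M x p q r) (hp : p.Prime)
    (hq : q.Prime) {y : G} (hy : y ∈ M) (hy1 : y ≠ 1) {g : G} (hgy : Commute g y) : g ∈ M := by
  have := Fact.mk hp
  have hyp : orderOf y = p := orderOf_eq_prime (h.pow_eq_one y hy) hy1
  obtain ⟨m, hm, k, rfl⟩ := h.exists_eq_mul_pow g
  have hfix : y ^ r ^ k = y := by
    rw [← h.conj_mul_pow_eq hm k hy, mul_assoc, ← hgy.eq, inv_mul_cancel_left]
  rw [zpow_eq_self_iff, hyp] at hfix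
  push_cast at hfix
  have hqk : q ∣ k := h.orderOf_intCast_eq hq hy hyp ▸ orderOf_dvd_of_pow_eq_one hfix
  rwa [orderOf_dvd_iff_pow_eq_one.mp (h.orderOf_eq ▸ hqk), mul_one]

theorem orderOf_eq_of_notMem [Finite G] (h : IsPowerSemidirect M x p q r) (hp : p.Prime)
    (hq : q.Prime) {g : G} (hg : g ∉ M) : orderOf g = q := by
  have := h.normal
  have := Fact.mk hq
  have hgq : g ^ q ∈ M := h.index_eq ▸ M.pow_index_mem g
  have hgq1 : g ^ q = 1 := by
    by_contra hne
    exact hg (h.mem_of_commute hp hq hgq hne (Commute.self_pow g q))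
  exact orderOf_eq_prime hgq1 fun h1 => hg (h1 ▸ M.one_mem)

theorem isCyclic_iff [Finite G] (h : IsPowerSemidirect M x p q r) (hp : p.Prime)
    (hq : q.Prime) (H : Subgroup G) :
    IsCyclic H ↔ H = ⊥ ∨ (H ≤ M ∧ Nat.card H = p) ∨ Nat.card H = q := by
  have := Fact.mk hp
  have := Fact.mk hq
  constructor
  · rw [Subgroup.isCyclic_iff_exists_zpowers_eq_top]
    rintro ⟨g, rfl⟩
    rw [Nat.card_zpowers]
    by_cases hgM : g ∈ M
    · by_cases hg1 : g = 1
      · exact Or.inl (hg1 ▸ Subgroup.zpowers_one_eq_bot)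
      · exact Or.inr (Or.inl ⟨Subgroup.zpowers_le.mpr hgM,
          orderOf_eq_prime (h.pow_eq_one g hgM) hg1⟩)
    · exact Or.inr (Or.inr (h.orderOf_eq_of_notMem hp hq hgM))
  · rintro (rfl | ⟨-, hH⟩ | hH)
    · infer_instance
    · exact isCyclic_of_prime_card hH
    · exact isCyclic_of_prime_card hH

theorem mul_comm_iff [Finite G] (h : IsPowerSemidirect M x p q r) (hp : p.Prime)
    (hq : q.Prime) (hqp : q < p) {k : ℕ} (hM : Nat.card M = p ^ k) {H K : Subgroup G}
    (hH : IsCyclic H) (hK : IsCyclic K) :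
    (H : Set G) * K = K * H ↔ ¬ (Nat.card H = q ∧ Nat.card K = q ∧ H ≠ K) := by
  have hG : Nat.card G = p ^ k * q := by rw [← M.card_mul_index, hM, h.index_eq]
  constructor
  · rintro hHK ⟨hHq, hKq, hne⟩
    exact hne (Subgroup.eq_of_mul_comm_of_card_eq hp hqp hG hHq hKq hHK)
  · intro hnot
    rcases (h.isCyclic_iff hp hq H).mp hH with rfl | ⟨hHM, -⟩ | hHq
    · exact h.mul_comm_of_le bot_le K
    · exact h.mul_comm_of_le hHM K
    rcases (h.isCyclic_iff hp hq K).mp hK with rfl | ⟨hKM, -⟩ | hKq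
    · exact (h.mul_comm_of_le bot_le H).symm
    · exact (h.mul_comm_of_le hKM H).symm
    by_cases hHK : H = K
    · rw [hHK]
    · exact absurd ⟨hHq, hKq, hHK⟩ hnot

theorem ncard_setOf_card_eq [Finite G] (h : IsPowerSemidirect M x p q r) (hp : p.Prime)
    (hq : q.Prime) (hqp : q ≠ p) : {H : Subgroup G | Nat.card H = q}.ncard = Nat.card M := by
  have := Fact.mk hp
  have helem : {g : G | g ∈ (⊤ : Subgroup G) ∧ orderOf g = q} = (M : Set G)ᶜ := by
    ext g
    simp only [Subgroup.mem_top, true_and, Set.mem_compl_iff, SetLike.mem_coe,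
      Set.mem_ofPred_eq]
    refine ⟨fun hg hgM => hqp ?_, h.orderOf_eq_of_notMem hp hq⟩
    have hg1 : g ≠ 1 := fun h1 => hq.one_lt.ne' (hg ▸ h1 ▸ orderOf_one)
    rw [← hg, orderOf_eq_prime (h.pow_eq_one g hgM) hg1]
  have hcount := ncard_setOf_orderOf_eq_prime (⊤ : Subgroup G) hq
  simp only [helem, le_top, true_and] at hcount
  have hcompl := Set.ncard_add_ncard_compl (M : Set G)
  rw [← M.card_mul_index, h.index_eq, hcount] at hcompl
  have := hq.two_le
  have hMq : Nat.card M * (q - 1) + Nat.card M = Nat.card M * q := by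
    rw [← Nat.mul_succ]; congr; omega
  change Nat.card M + _ = _ at hcompl
  exact Nat.eq_of_mul_eq_mul_right (by omega : 0 < q - 1) (by omega)

theorem ncard_setOf_le_card_eq_mul [Finite G] (h : IsPowerSemidirect M x p q r) (hp : p.Prime) :
    {H : Subgroup G | H ≤ M ∧ Nat.card H = p}.ncard * (p - 1) = Nat.card M - 1 := by
  have := Fact.mk hp
  have helem : {g : G | g ∈ M ∧ orderOf g = p} = (M : Set G) \ {1} := by
    ext g
    simp only [Set.mem_sdiff, SetLike.mem_coe, Set.mem_singleton_iff, Set.mem_ofPred_eq]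
    refine and_congr_right fun hgM => ⟨fun hg h1 => hp.one_lt.ne' (hg ▸ h1 ▸ orderOf_one),
      orderOf_eq_prime (h.pow_eq_one g hgM)⟩
  rw [← ncard_setOf_orderOf_eq_prime M hp, helem, Set.ncard_sdiff_singleton_of_mem M.one_mem]
  rfl

theorem ncard_setOf_isCyclic [Finite G] (h : IsPowerSemidirect M x p q r) (hp : p.Prime)
    (hq : q.Prime) (hqp : q ≠ p) :
    {H : Subgroup G | IsCyclic H}.ncard =
      1 + {H : Subgroup G | H ≤ M ∧ Nat.card H = p}.ncard + Nat.card M := by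
  have hset : {H : Subgroup G | IsCyclic H} =
      insert ⊥ ({H | H ≤ M ∧ Nat.card H = p} ∪ {H | Nat.card H = q}) := by
    ext H
    simp only [Set.mem_insert_iff, Set.mem_union, Set.mem_ofPred_eq]
    exact h.isCyclic_iff hp hq H
  have hbot : (⊥ : Subgroup G) ∉ {H | H ≤ M ∧ Nat.card H = p} ∪ {H | Nat.card H = q} := by
    simp only [Set.mem_union, Set.mem_ofPred_eq, Subgroup.card_bot]
    rintro (⟨-, h1⟩ | h1)
    · exact hp.one_lt.ne h1
    · exact hq.one_lt.ne h1
  have hdisj : Disjoint {H : Subgroup G | H ≤ M ∧ Nat.card H = p} {H | Nat.card H = q} :=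
    Set.disjoint_left.mpr fun H hHp hHq => hqp (hHq.symm.trans hHp.2)
  rw [hset, Set.ncard_insert_of_notMem hbot, Set.ncard_union_eq hdisj,
    h.ncard_setOf_card_eq hp hq hqp]
  ring

end IsPowerSemidirect

theorem stmt_6_general (p q n : ℕ) (hp : p.Prime) (hn : 2 ≤ n)
    (hq : q.Prime) (hqd : q ∣ p - 1)
    (G : Type*) [Group G] [Fintype G]
    (M : Subgroup G) (hMnormal : M.Normal)
    (hMab : ∀ a ∈ M, ∀ b ∈ M, a * b = b * a)
    (hMelem : ∀ y ∈ M, y ^ p = 1)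
    (hMcard : Nat.card M = p ^ (n - 1))
    (x : G) (hx : orderOf x = q)
    (hgen : M ⊔ Subgroup.zpowers x = ⊤)
    (hcard : Nat.card G = p ^ (n - 1) * q)
    (r : ℤ) (hr : (r : ZMod p) ≠ 1)
    (hpow : ∀ y ∈ M, x⁻¹ * y * x = y ^ r) :
    csd G = ((1 + ∑ i ∈ Finset.range (n - 1), (p : ℚ) ^ i) *
          (1 + ∑ i ∈ Finset.range n, (p : ℚ) ^ i) +
        (p : ℚ) ^ (n - 1) * (2 + ∑ i ∈ Finset.range (n - 1), (p : ℚ) ^ i)) /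
      (1 + ∑ i ∈ Finset.range n, (p : ℚ) ^ i) ^ 2 := by
  have hqp : q < p :=
    (Nat.le_of_dvd (Nat.sub_pos_of_lt hp.one_lt) hqd).trans_lt (Nat.sub_lt hp.pos one_pos)
  have hindex : M.index = q := by
    refine Nat.eq_of_mul_eq_mul_left (pow_pos hp.pos (n - 1)) ?_
    rw [← hMcard, M.card_mul_index, hcard, hMcard]
  have hG : IsPowerSemidirect M x p q r := ⟨hMnormal, hMab, hMelem, hx, hgen, hindex, hr, hpow⟩
  have ht := hG.ncard_setOf_le_card_eq_mul hp
  rw [csd_eq_of_mul_comm_iff {H | Nat.card H = q} (fun H hH => haveI := Fact.mk hq;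
      isCyclic_of_prime_card hH) (fun H K hH hK => hG.mul_comm_iff hp hq hqp hMcard hH hK),
    hG.ncard_setOf_isCyclic hp hq hqp.ne, hG.ncard_setOf_card_eq hp hq hqp.ne, hMcard]
  set t := {H : Subgroup G | H ≤ M ∧ Nat.card H = p}.ncard
  obtain ⟨k, rfl⟩ : ∃ k, n = k + 1 := ⟨n - 1, by omega⟩
  rw [hMcard, Nat.add_sub_cancel] at ht
  have htQ : (t : ℚ) = ∑ i ∈ range k, (p : ℚ) ^ i := by
    rw [← Nat.div_eq_of_eq_mul_left (Nat.sub_pos_of_lt hp.one_lt) ht.symm,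
      ← Nat.geomSum_eq hp.two_le]
    norm_cast
  rw [Nat.add_sub_cancel, sum_range_succ]
  push_cast
  rw [htQ]
  ring

theorem stmt_6 (p q n : ℕ) (hp : p.Prime) (hodd : Odd p) (hn : 2 ≤ n)
    (hq : q.Prime) (hqd : q ∣ p - 1)
    (G : Type*) [Group G] [Fintype G]
    (M : Subgroup G) (hMnormal : M.Normal)
    (hMab : ∀ a ∈ M, ∀ b ∈ M, a * b = b * a)
    (hMelem : ∀ y ∈ M, y ^ p = 1)
    (hMcard : Nat.card M = p ^ (n - 1))
    (x : G) (hx : orderOf x = q)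
    (hgen : M ⊔ Subgroup.zpowers x = ⊤)
    (hcard : Nat.card G = p ^ (n - 1) * q)
    (r : ℤ) (hr : (r : ZMod p) ≠ 1)
    (hpow : ∀ y ∈ M, x⁻¹ * y * x = y ^ r) :
    csd G = ((1 + ∑ i ∈ Finset.range (n - 1), (p : ℚ) ^ i) *
          (1 + ∑ i ∈ Finset.range n, (p : ℚ) ^ i) +
        (p : ℚ) ^ (n - 1) * (2 + ∑ i ∈ Finset.range (n - 1), (p : ℚ) ^ i)) /
      (1 + ∑ i ∈ Finset.range n, (p : ℚ) ^ i) ^ 2 :=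
  stmt_6_general p q n hp hn hq hqd G M hMnormal hMab hMelem hMcard x hx hgen hcard r hr hpow
end

section
/- Let m ≥ 2 and let D_{2m} = ⟨x, y | x^m = y² = 1, yxy = x⁻¹⟩ be the dihedral group of order 2m, and let τ(m) denote the number of positive divisors of m. If m is odd then csd(D_{2m}) = [τ(m)(τ(m) + m) + m(τ(m) + 1)] / (τ(m) + m)², and if m is even then csd(D_{2m}) = [τ(m)(τ(m) + m) + m(τ(m) + 2)] / (τ(m) + m)². -/
/-!
The cyclic subgroups of `D_{2m}` are the `τ(m)` subgroups of the rotation subgroup `⟨r⟩ ≅ ℤ/m`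
and the `m` subgroups `{1, s r^a}` of order two. Subgroups of `⟨r⟩` are normal, so they permute
with every subgroup. For involutions `s, t` the product `{1, s}{1, t} = {1, s, t, st}` equals
`{1, t}{1, s}` iff `st = ts`, and `s r^a` commutes with `s r^b` iff `2(a - b) = 0` in `ℤ/m`,
which has `gcd(m, 2)` solutions `b` for each `a`. So `τ(τ + m) + m(τ + gcd(m, 2))` of the
`(τ + m)²` pairs permute.
-/

open Pointwise

open Subgroup

-- A subgroup of order `d` is the kernel of `x ↦ x ^ d`, which has order `gcd (Nat.card G) d`.
theorem IsCyclic.card_subgroup {G : Type*} [CommGroup G] [IsCyclic G] [Finite G] :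
    Nat.card (Subgroup G) = (Nat.card G).divisors.card := by
  have hG : Nat.card G ≠ 0 := Nat.card_pos.ne'
  let e : Subgroup G ≃ (Nat.card G).divisors :=
    { toFun H := ⟨Nat.card H, Nat.mem_divisors.mpr ⟨H.card_subgroup_dvd_card, hG⟩⟩
      invFun d := (powMonoidHom d.1 : G →* G).ker
      left_inv H := by
        symm
        apply Subgroup.eq_of_le_of_card_ge
        · intro x hx
          exact congrArg Subtype.val (pow_card_eq_one' (G := H) (x := ⟨x, hx⟩))
        · rw [IsCyclic.card_powMonoidHom_ker, Nat.gcd_eq_right H.card_subgroup_dvd_card]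
      right_inv d := Subtype.ext <| (IsCyclic.card_powMonoidHom_ker G d).trans
        (Nat.gcd_eq_right (Nat.dvd_of_mem_divisors d.2)) }
  rw [Nat.card_congr e, Nat.card_eq_finsetCard]

theorem Subgroup.coe_zpowers_of_orderOf_eq_two {G : Type*} [Group G] {g : G}
    (hg : orderOf g = 2) :
    (zpowers g : Set G) = {1, g} := by
  classical
  have hfin : IsOfFinOrder g := orderOf_pos_iff.mp (by omega)
  ext x
  rw [SetLike.mem_coe, hfin.mem_zpowers_iff_mem_range_orderOf, hg]
  simp [Finset.range_add_one, or_comm, eq_comm]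

theorem Set.one_pair_mul_one_pair {G : Type*} [Group G] (s t : G) :
    ({1, s} : Set G) * {1, t} = {1, t, s, s * t} := by
  ext x
  simp only [Set.mem_mul, Set.mem_insert_iff, Set.mem_singleton_iff]
  constructor
  · rintro ⟨y, (rfl | rfl), z, (rfl | rfl), rfl⟩ <;> simp
  · rintro (rfl | rfl | rfl | rfl)
    exacts [⟨1, .inl rfl, 1, .inl rfl, mul_one 1⟩, ⟨1, .inl rfl, _, .inr rfl, one_mul _⟩,
      ⟨_, .inr rfl, 1, .inl rfl, mul_one _⟩, ⟨_, .inr rfl, _, .inr rfl, rfl⟩]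

theorem Set.one_pair_mul_comm_iff {G : Type*} [Group G] (s t : G) :
    ({1, s} : Set G) * {1, t} = {1, t} * {1, s} ↔ Commute s t := by
  rw [Set.one_pair_mul_one_pair, Set.one_pair_mul_one_pair]
  refine ⟨fun h => ?_, fun h => by rw [h.eq, Set.insert_comm t s]⟩
  have hst : s * t ∈ ({1, s, t, t * s} : Set G) := h ▸ by simp
  simp only [Set.mem_insert_iff, Set.mem_singleton_iff] at hst
  rcases hst with hst | hst | hst | hst
  · rw [eq_inv_of_mul_eq_one_right hst]; exact Commute.inv_right (Commute.refl s)
  · rw [mul_eq_left.mp hst]; exact Commute.one_right s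
  · rw [mul_eq_right.mp hst]; exact Commute.one_left t
  · exact hst

theorem ZMod.card_nsmul_eq_zero {m : ℕ} [NeZero m] (d : ℕ) :
    Nat.card {x : ZMod m // d • x = 0} = m.gcd d := by
  simpa using IsAddCyclic.card_nsmulAddMonoidHom_ker (ZMod m) d

def Subgroup.Permutable {G : Type*} [Group G] (H K : Subgroup G) : Prop :=
  (H : Set G) * K = K * H

theorem csd_eq_card_permutable (G : Type*) [Group G] :
    csd G = (Nat.card {p : {H : Subgroup G // IsCyclic H} × {H : Subgroup G // IsCyclic H} //
      p.1.1.Permutable p.2.1} : ℚ) / (Nat.card {H : Subgroup G // IsCyclic H} : ℚ) ^ 2 := by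
  rw [csd]
  congr 2
  exact Nat.card_congr
    { toFun p := ⟨(⟨p.1.1, p.2.1⟩, ⟨p.1.2, p.2.2.1⟩), p.2.2.2⟩
      invFun p := ⟨(p.1.1.1, p.1.2.1), p.1.1.2, p.1.2.2, p.2⟩ }

namespace DihedralGroup

variable {m : ℕ}

def rotationHom : Multiplicative (ZMod m) →* DihedralGroup m where
  toFun i := r i.toAdd
  map_one' := rfl
  map_mul' _ _ := (r_mul_r _ _).symm

@[simp]
theorem rotationHom_apply (i : Multiplicative (ZMod m)) : rotationHom i = r i.toAdd := rfl

theorem rotationHom_injective : Function.Injective (rotationHom (m := m)) :=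
  fun _ _ h => r.inj h

theorem sr_notMem_range_rotationHom (a : ZMod m) : sr a ∉ (rotationHom (m := m)).range := by
  rintro ⟨i, ⟨⟩⟩

theorem normal_map_rotationHom (A : Subgroup (Multiplicative (ZMod m))) :
    (A.map rotationHom).Normal := by
  constructor
  rintro _ ⟨i, hi, rfl⟩ (⟨j⟩ | ⟨j⟩)
  · refine ⟨i, hi, ?_⟩
    simp [inv_r, r_mul_r]
  · refine ⟨i⁻¹, A.inv_mem hi, ?_⟩
    simp [inv_sr, sr_mul_sr]

theorem coe_zpowers_sr (a : ZMod m) : (zpowers (sr a) : Set (DihedralGroup m)) = {1, sr a} :=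
  coe_zpowers_of_orderOf_eq_two (orderOf_sr a)

theorem commute_sr_sr_iff (a b : ZMod m) : Commute (sr a) (sr b) ↔ 2 • (a - b) = 0 := by
  rw [Commute, SemiconjBy, sr_mul_sr, sr_mul_sr, r.injEq, two_nsmul]
  constructor <;> intro h <;> linear_combination -h

theorem isCyclic_map_rotationHom (A : Subgroup (Multiplicative (ZMod m))) :
    IsCyclic (A.map rotationHom) :=
  isCyclic_of_surjective _ (rotationHom.subgroupMap_surjective A)

-- A cyclic subgroup is generated by a rotation `r i`, so it is the image of a subgroup of
-- `ZMod m`, or by a reflection `sr a`, so it is `{1, sr a}`.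
noncomputable def cyclicSubgroupEquiv :
    Subgroup (Multiplicative (ZMod m)) ⊕ ZMod m ≃
      {H : Subgroup (DihedralGroup m) // IsCyclic H} :=
  Equiv.ofBijective
    (Sum.elim (fun A => ⟨A.map rotationHom, isCyclic_map_rotationHom A⟩)
      (fun a => ⟨zpowers (sr a), inferInstance⟩)) <| by
    refine ⟨Function.Injective.sumElim ?_ ?_ ?_, ?_⟩
    · intro A B h
      exact map_injective rotationHom_injective (congrArg Subtype.val h)
    · intro a b h
      have hab : sr a ∈ (zpowers (sr b) : Set (DihedralGroup m)) := by
        rw [← show zpowers (sr a) = zpowers (sr b) from congrArg Subtype.val h]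
        exact mem_zpowers (sr a)
      rw [coe_zpowers_sr] at hab
      rcases hab with hab | hab
      · cases hab
      · exact sr.inj hab
    · intro A a h
      have ha : sr a ∈ A.map rotationHom := by
        rw [show A.map rotationHom = zpowers (sr a) from congrArg Subtype.val h]
        exact mem_zpowers (sr a)
      exact sr_notMem_range_rotationHom a (map_le_range rotationHom A ha)
    · rintro ⟨H, hH⟩
      obtain ⟨g, rfl⟩ := H.isCyclic_iff_exists_zpowers_eq_top.mp hH
      rcases g with i | a
      · exact ⟨.inl (zpowers (Multiplicative.ofAdd i)), Subtype.ext (MonoidHom.map_zpowers _ _)⟩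
      · exact ⟨.inr a, rfl⟩

@[simp]
theorem cyclicSubgroupEquiv_inl (A : Subgroup (Multiplicative (ZMod m))) :
    (cyclicSubgroupEquiv (.inl A)).1 = A.map rotationHom := rfl

@[simp]
theorem cyclicSubgroupEquiv_inr (a : ZMod m) :
    (cyclicSubgroupEquiv (.inr a)).1 = zpowers (sr a) := rfl

theorem card_subgroup_multiplicative_zmod [NeZero m] :
    Nat.card (Subgroup (Multiplicative (ZMod m))) = m.divisors.card := by
  rw [IsCyclic.card_subgroup, Nat.card_congr Multiplicative.toAdd, Nat.card_zmod]

theorem card_cyclicSubgroup [NeZero m] :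
    Nat.card {H : Subgroup (DihedralGroup m) // IsCyclic H} = m.divisors.card + m := by
  rw [← Nat.card_congr cyclicSubgroupEquiv, Nat.card_sum, card_subgroup_multiplicative_zmod,
    Nat.card_zmod]

theorem permutable_map_rotationHom_left (A : Subgroup (Multiplicative (ZMod m)))
    (K : Subgroup (DihedralGroup m)) : (A.map rotationHom).Permutable K :=
  have := normal_map_rotationHom A
  (set_mul_normal_comm _ _).symm

theorem permutable_map_rotationHom_right (H : Subgroup (DihedralGroup m))
    (A : Subgroup (Multiplicative (ZMod m))) : H.Permutable (A.map rotationHom) :=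
  have := normal_map_rotationHom A
  set_mul_normal_comm _ _

theorem permutable_zpowers_sr_iff (a b : ZMod m) :
    (zpowers (sr a)).Permutable (zpowers (sr b)) ↔ 2 • (a - b) = 0 := by
  rw [Subgroup.Permutable, coe_zpowers_sr, coe_zpowers_sr, Set.one_pair_mul_comm_iff,
    commute_sr_sr_iff]

theorem card_permutable_inl [NeZero m] (A : Subgroup (Multiplicative (ZMod m))) :
    Nat.card {t // (cyclicSubgroupEquiv (.inl A)).1.Permutable
        (cyclicSubgroupEquiv (m := m) t).1} = m.divisors.card + m := by
  simp only [cyclicSubgroupEquiv_inl]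
  rw [Nat.card_congr (Equiv.subtypeUnivEquiv fun t => permutable_map_rotationHom_left A _),
    Nat.card_sum, card_subgroup_multiplicative_zmod, Nat.card_zmod]

theorem card_permutable_inr [NeZero m] (a : ZMod m) :
    Nat.card {t // (cyclicSubgroupEquiv (.inr a)).1.Permutable
        (cyclicSubgroupEquiv (m := m) t).1} =
      m.divisors.card + m.gcd 2 := by
  rw [Nat.card_congr Equiv.subtypeSum, Nat.card_sum]
  simp only [cyclicSubgroupEquiv_inr, cyclicSubgroupEquiv_inl, permutable_zpowers_sr_iff]
  rw [Nat.card_congr (Equiv.subtypeUnivEquiv fun A => permutable_map_rotationHom_right _ A),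
    card_subgroup_multiplicative_zmod, ← ZMod.card_nsmul_eq_zero]
  exact congrArg _ (Nat.card_congr ((Equiv.subLeft a).subtypeEquiv fun _ => Iff.rfl))

theorem card_permutable_pairs [NeZero m] :
    Nat.card {p : {H : Subgroup (DihedralGroup m) // IsCyclic H} ×
        {H : Subgroup (DihedralGroup m) // IsCyclic H} // p.1.1.Permutable p.2.1} =
      m.divisors.card * (m.divisors.card + m) + m * (m.divisors.card + m.gcd 2) := by
  rw [← Nat.card_congr (((Equiv.subtypeProdEquivSigmaSubtype fun s t =>
        (cyclicSubgroupEquiv s).1.Permutable (cyclicSubgroupEquiv (m := m) t).1).symm.trans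
      ((Equiv.prodCongr cyclicSubgroupEquiv cyclicSubgroupEquiv).subtypeEquiv fun _ => Iff.rfl))),
    Nat.card_sigma, Fintype.sum_sum_type]
  simp only [card_permutable_inl, card_permutable_inr, Finset.sum_const, Finset.card_univ,
    smul_eq_mul, ← Nat.card_eq_fintype_card, card_subgroup_multiplicative_zmod, Nat.card_zmod]

theorem csd_eq [NeZero m] :
    csd (DihedralGroup m) = ((m.divisors.card : ℚ) * (m.divisors.card + m) +
      m * (m.divisors.card + m.gcd 2)) / (m.divisors.card + m) ^ 2 := by
  rw [csd_eq_card_permutable, card_permutable_pairs, card_cyclicSubgroup]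
  push_cast
  rfl

end DihedralGroup

theorem stmt_8 (m : ℕ) (hm : 2 ≤ m) :
    (Odd m → csd (DihedralGroup m) =
      ((m.divisors.card : ℚ) * ((m.divisors.card : ℚ) + m) +
        m * ((m.divisors.card : ℚ) + 1)) / ((m.divisors.card : ℚ) + m) ^ 2) ∧
    (Even m → csd (DihedralGroup m) =
      ((m.divisors.card : ℚ) * ((m.divisors.card : ℚ) + m) +
        m * ((m.divisors.card : ℚ) + 2)) / ((m.divisors.card : ℚ) + m) ^ 2) := by
  have : NeZero m := ⟨by omega⟩
  refine ⟨fun hodd => ?_, fun heven => ?_⟩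
  · rw [DihedralGroup.csd_eq, Nat.Coprime.gcd_eq_one (Nat.coprime_two_right.mpr hodd),
      Nat.cast_one]
  · rw [DihedralGroup.csd_eq, Nat.gcd_eq_right (even_iff_two_dvd.mp heven), Nat.cast_ofNat]
end

section
/- For every integer n ≥ 3, the generalized quaternion group Q_{2^n} = ⟨x, y | x^{2^{n−1}} = y⁴ = 1, yxy⁻¹ = x^{2^{n−1}−1}⟩ of order 2^n satisfies csd(Q_{2^n}) = (n² + (n+1)·2^{n−1}) / (n + 2^{n−2})². In particular, csd(Q₁₆) = 7/8. -/
open Pointwise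

/-!
Write `Q = QuaternionGroup m`, of order `4m`. Its cyclic subgroups are the subgroups of the cyclic
group `⟨a 1⟩` of order `2m`, one for each divisor of `2m`, together with the `m` subgroups
`⟨xa u⟩ = {1, a m, xa u, xa (u + m)}`, which depend only on `u mod m`. Conjugation inverts
`a 1`, so every subgroup of `⟨a 1⟩` is normal and permutes with all subgroups. The rotations in
`⟨xa u⟩⟨xa v⟩` are the `a w` with `w ≡ 0` or `w ≡ v - u (mod m)`, so `⟨xa u⟩` and `⟨xa v⟩`
permute iff `2 (v - u) ≡ 0 (mod m)`, which has `gcd m 2` solutions `v mod m`. With `τ` the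
number of divisors of `2m` this gives `csd Q = (τ (τ + m) + m (τ + gcd m 2)) / (τ + m)²`, and
`τ = n` for `m = 2 ^ (n - 2)`.
-/

open Subgroup

theorem csd_eq_of_equiv {G ι : Type*} [Group G] (e : ι ≃ {H : Subgroup G // IsCyclic H})
    (R : ι → ι → Prop)
    (hR : ∀ x y, ((e x).1 : Set G) * ((e y).1 : Set G) = ((e y).1 : Set G) * ((e x).1 : Set G) ↔
      R x y) :
    csd G = Nat.card {p : ι × ι // R p.1 p.2} / Nat.card ι ^ 2 := by
  let pairs : {p : ι × ι // R p.1 p.2} ≃ {pr : Subgroup G × Subgroup G //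
      IsCyclic pr.1 ∧ IsCyclic pr.2 ∧
        (pr.1 : Set G) * (pr.2 : Set G) = (pr.2 : Set G) * (pr.1 : Set G)} :=
    { toFun := fun p => ⟨((e p.1.1).1, (e p.1.2).1), (e _).2, (e _).2, (hR _ _).2 p.2⟩
      invFun := fun q => ⟨(e.symm ⟨q.1.1, q.2.1⟩, e.symm ⟨q.1.2, q.2.2.1⟩),
        (hR _ _).1 (by simpa using q.2.2.2)⟩
      left_inv := fun p => by simp
      right_inv := fun q => by simp }
  rw [csd, Nat.card_congr pairs.symm, Nat.card_congr e.symm]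

section CyclicSubgroups

variable {G : Type*} [Group G]

theorem Subgroup.zpowers_pow_gcd_orderOf (g : G) (k : ℕ) :
    zpowers (g ^ k.gcd (orderOf g)) = zpowers (g ^ k) := by
  apply le_antisymm <;> rw [zpowers_le]
  · have bezout : g ^ k.gcd (orderOf g) =
        (g ^ k) ^ k.gcdA (orderOf g) * (g ^ orderOf g) ^ k.gcdB (orderOf g) := by
      rw [← zpow_natCast, Nat.gcd_eq_gcd_ab, zpow_add, zpow_mul, zpow_mul, zpow_natCast,
        zpow_natCast]
    rw [bezout, pow_orderOf_eq_one, one_zpow, mul_one]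
    exact zpow_mem_zpowers (g ^ k) _
  · obtain ⟨c, hc⟩ := Nat.gcd_dvd_left k (orderOf g)
    rw [show g ^ k = (g ^ k.gcd (orderOf g)) ^ c by rw [← pow_mul, ← hc]]
    exact npow_mem_zpowers _ _

theorem Subgroup.natCard_subgroups_le_zpowers {g : G} (hg : IsOfFinOrder g) :
    Nat.card {H : Subgroup G // H ≤ zpowers g} = (orderOf g).divisors.card := by
  have hg0 : orderOf g ≠ 0 := hg.orderOf_pos.ne'
  let f : (orderOf g).divisors → {H : Subgroup G // H ≤ zpowers g} := fun d =>
    ⟨zpowers (g ^ (d : ℕ)), zpowers_le.mpr (npow_mem_zpowers g d)⟩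
  have card_f (d : (orderOf g).divisors) : Nat.card (f d).1 = orderOf g / d := by
    rw [Nat.card_zpowers, orderOf_pow_of_dvd (Nat.pos_of_mem_divisors d.2).ne'
      (Nat.dvd_of_mem_divisors d.2)]
  have hf : Function.Bijective f := by
    constructor
    · intro d d' h
      have h' := congrArg (fun H => orderOf g / Nat.card H.1) h
      simp only [card_f, Nat.div_div_self (Nat.dvd_of_mem_divisors d.2) hg0,
        Nat.div_div_self (Nat.dvd_of_mem_divisors d'.2) hg0] at h'
      exact Subtype.ext h'
    · rintro ⟨H, hH⟩
      obtain ⟨k, rfl⟩ := (le_zpowers_iff g H).mp hH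
      exact ⟨⟨k.gcd (orderOf g), Nat.mem_divisors.mpr ⟨Nat.gcd_dvd_right _ _, hg0⟩⟩,
        Subtype.ext (zpowers_pow_gcd_orderOf g k)⟩
  rw [← Nat.card_congr (Equiv.ofBijective f hf), Nat.card_eq_fintype_card, Fintype.card_coe]

end CyclicSubgroups

namespace QuaternionGroup

variable {m : ℕ}

def proj (m : ℕ) : ZMod (2 * m) →+* ZMod m := ZMod.castHom (dvd_mul_left m 2) (ZMod m)

theorem inv_a (i : ZMod (2 * m)) : (a i)⁻¹ = a (-i) := rfl

theorem inv_xa (i : ZMod (2 * m)) : (xa i)⁻¹ = xa ((m : ZMod (2 * m)) + i) := rfl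

theorem natCast_add_self : (m : ZMod (2 * m)) + m = 0 := by
  rw [← two_mul]
  exact_mod_cast ZMod.natCast_self (2 * m)

@[simp]
theorem proj_natCast (k : ℕ) : proj m k = k := map_natCast _ k

theorem xa_pow_three (u : ZMod (2 * m)) : xa u ^ 3 = xa (u + (m : ZMod (2 * m))) := by
  rw [pow_succ, xa_sq, a_mul_xa]
  congr 1
  linear_combination -(natCast_add_self (m := m))

theorem conj_a_eq_or_eq_inv (g : QuaternionGroup m) (i : ZMod (2 * m)) :
    g * a i * g⁻¹ = a i ∨ g * a i * g⁻¹ = (a i)⁻¹ := by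
  rcases g with j | j
  · left
    rw [inv_a, a_mul_a, a_mul_a]
    ring_nf
  · right
    rw [inv_xa, xa_mul_a, xa_mul_xa, inv_a]
    congr 1
    linear_combination natCast_add_self (m := m)

section NeZero

variable [NeZero m]

theorem proj_natCast_val (i : ZMod m) : proj m (i.val : ZMod (2 * m)) = i := by
  rw [proj_natCast, ZMod.natCast_zmod_val]

theorem proj_eq_zero_iff (u : ZMod (2 * m)) : proj m u = 0 ↔ u = 0 ∨ u = m := by
  constructor
  · rw [← ZMod.natCast_zmod_val u, proj_natCast, ZMod.natCast_eq_zero_iff]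
    rintro ⟨c, hc⟩
    have hc2 : c < 2 := by
      have := ZMod.val_lt u
      rw [hc] at this
      exact lt_of_mul_lt_mul_left (by linarith) (Nat.zero_le m)
    interval_cases c <;> simp [hc]
  · rintro (rfl | rfl) <;> simp

theorem a_mem_zpowers_a_one (i : ZMod (2 * m)) : a i ∈ zpowers (a 1 : QuaternionGroup m) := by
  rw [← ZMod.natCast_zmod_val i, ← a_one_pow]
  exact npow_mem_zpowers _ _

theorem xa_notMem_zpowers_a_one (j : ZMod (2 * m)) :
    xa j ∉ zpowers (a 1 : QuaternionGroup m) := by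
  rw [← mem_powers_iff_mem_zpowers]
  rintro ⟨k, hk⟩
  simp only [a_one_pow] at hk
  cases hk

theorem normal_of_le_zpowers_a_one {H : Subgroup (QuaternionGroup m)}
    (hH : H ≤ zpowers (a 1)) : H.Normal := by
  refine ⟨fun h hh g => ?_⟩
  rcases h with i | j
  · rcases conj_a_eq_or_eq_inv g i with h | h <;> rw [h]
    exacts [hh, inv_mem hh]
  · exact absurd (hH hh) (xa_notMem_zpowers_a_one j)

theorem mem_zpowers_xa_iff (g : QuaternionGroup m) (u : ZMod (2 * m)) :
    g ∈ zpowers (xa u) ↔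
      g = 1 ∨ g = xa u ∨ g = a m ∨ g = xa (u + (m : ZMod (2 * m))) := by
  classical
  rw [mem_zpowers_iff_mem_range_orderOf, orderOf_xa]
  simp only [Finset.mem_image, Finset.mem_range]
  constructor
  · rintro ⟨k, hk, rfl⟩
    interval_cases k <;> simp [xa_pow_three]
  · rintro (rfl | rfl | rfl | rfl)
    exacts [⟨0, by norm_num, pow_zero _⟩, ⟨1, by norm_num, pow_one _⟩,
      ⟨2, by norm_num, xa_sq u⟩, ⟨3, by norm_num, xa_pow_three u⟩]

theorem a_mem_zpowers_xa_iff (i u : ZMod (2 * m)) : a i ∈ zpowers (xa u) ↔ proj m i = 0 := by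
  rw [mem_zpowers_xa_iff, proj_eq_zero_iff, one_def]
  simp only [a.injEq, reduceCtorEq, or_false, false_or]

theorem xa_mem_zpowers_xa_iff (j u : ZMod (2 * m)) :
    xa j ∈ zpowers (xa u) ↔ proj m j = proj m u := by
  rw [mem_zpowers_xa_iff, ← sub_eq_zero (a := proj m j), ← map_sub, proj_eq_zero_iff,
    sub_eq_zero, sub_eq_iff_eq_add', one_def]
  simp only [reduceCtorEq, xa.injEq, false_or]

theorem zpowers_xa_eq_zpowers_xa_iff (u v : ZMod (2 * m)) :
    zpowers (xa u) = zpowers (xa v) ↔ proj m u = proj m v := by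
  refine ⟨fun h => (xa_mem_zpowers_xa_iff u v).mp (h ▸ mem_zpowers _), fun h => ?_⟩
  apply le_antisymm <;> rw [zpowers_le, xa_mem_zpowers_xa_iff]
  exacts [h, h.symm]

theorem a_mem_zpowers_xa_mul_zpowers_xa_iff (w u v : ZMod (2 * m)) :
    a w ∈ (zpowers (xa u) : Set (QuaternionGroup m)) *
        (zpowers (xa v) : Set (QuaternionGroup m)) ↔
      proj m w = 0 ∨ proj m w = proj m v - proj m u := by
  constructor
  · rintro ⟨i | j, hh, i' | j', hk, hw⟩ <;>
      simp only [SetLike.mem_coe, a_mem_zpowers_xa_iff, xa_mem_zpowers_xa_iff, a_mul_a, xa_mul_xa,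
        a_mul_xa, xa_mul_a, a.injEq, reduceCtorEq] at hh hk hw
    · left
      rw [← hw, map_add, hh, hk, add_zero]
    · right
      rw [← hw, map_sub, map_add, proj_natCast, ZMod.natCast_self, hh, hk, zero_add]
  · rintro (h | h)
    · exact ⟨a w, (a_mem_zpowers_xa_iff w u).mpr h, 1, one_mem _, mul_one _⟩
    · refine ⟨xa u, mem_zpowers _, xa (w + u - m), ?_, ?_⟩
      · rw [SetLike.mem_coe, xa_mem_zpowers_xa_iff, map_sub, map_add, proj_natCast,
          ZMod.natCast_self, h]
        ring
      · change xa u * xa _ = a w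
        rw [xa_mul_xa]
        ring_nf

theorem xa_mem_zpowers_xa_mul_zpowers_xa_iff (w u v : ZMod (2 * m)) :
    xa w ∈ (zpowers (xa u) : Set (QuaternionGroup m)) *
        (zpowers (xa v) : Set (QuaternionGroup m)) ↔
      proj m w = proj m u ∨ proj m w = proj m v := by
  constructor
  · rintro ⟨i | j, hh, i' | j', hk, hw⟩ <;>
      simp only [SetLike.mem_coe, a_mem_zpowers_xa_iff, xa_mem_zpowers_xa_iff, a_mul_a, xa_mul_xa,
        a_mul_xa, xa_mul_a, xa.injEq, reduceCtorEq] at hh hk hw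
    · right
      rw [← hw, map_sub, hh, hk, sub_zero]
    · left
      rw [← hw, map_add, hh, hk, add_zero]
  · rintro (h | h)
    · exact ⟨xa w, (xa_mem_zpowers_xa_iff w u).mpr h, 1, one_mem _, mul_one _⟩
    · exact ⟨1, one_mem _, xa w, (xa_mem_zpowers_xa_iff w v).mpr h, one_mul _⟩

theorem zpowers_xa_mul_comm_iff (u v : ZMod (2 * m)) :
    (zpowers (xa u) : Set (QuaternionGroup m)) * (zpowers (xa v) : Set (QuaternionGroup m)) =
        (zpowers (xa v) : Set (QuaternionGroup m)) * (zpowers (xa u) : Set (QuaternionGroup m)) ↔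
      2 * (proj m v - proj m u) = 0 := by
  constructor
  · intro h
    have hvu := (a_mem_zpowers_xa_mul_zpowers_xa_iff (v - u) u v).mpr (.inr (map_sub _ _ _))
    rw [h, a_mem_zpowers_xa_mul_zpowers_xa_iff, map_sub] at hvu
    rcases hvu with h0 | h0
    exacts [by rw [h0, mul_zero], by linear_combination h0]
  · intro h
    ext (w | w)
    · rw [a_mem_zpowers_xa_mul_zpowers_xa_iff, a_mem_zpowers_xa_mul_zpowers_xa_iff,
        show proj m v - proj m u = proj m u - proj m v by linear_combination h]
    · rw [xa_mem_zpowers_xa_mul_zpowers_xa_iff, xa_mem_zpowers_xa_mul_zpowers_xa_iff, or_comm]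

theorem isCyclic_iff_le_zpowers_a_one_or_eq_zpowers_xa (H : Subgroup (QuaternionGroup m)) :
    IsCyclic H ↔ H ≤ zpowers (a 1) ∨ ∃ u, H = zpowers (xa u) := by
  constructor
  · intro hH
    obtain ⟨g, rfl⟩ := (H.isCyclic_iff_exists_zpowers_eq_top).mp hH
    rcases g with i | u
    exacts [.inl (zpowers_le.mpr (a_mem_zpowers_a_one i)), .inr ⟨u, rfl⟩]
  · rintro (h | ⟨u, rfl⟩)
    exacts [isCyclic_of_le h, inferInstance]

abbrev CyclicIndex (m : ℕ) :=
  {H : Subgroup (QuaternionGroup m) // H ≤ zpowers (a 1)} ⊕ ZMod m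

def cyclicSubgroup : CyclicIndex m → Subgroup (QuaternionGroup m)
  | .inl H => H
  | .inr i => zpowers (xa (i.val : ZMod (2 * m)))

theorem cyclicSubgroup_injective : Function.Injective (cyclicSubgroup (m := m)) := by
  rintro (H | i) (K | j) h <;> simp only [cyclicSubgroup] at h
  · exact congrArg Sum.inl (Subtype.ext h)
  · exact absurd (H.2 (h ▸ mem_zpowers _)) (xa_notMem_zpowers_a_one _)
  · exact absurd (K.2 (h ▸ mem_zpowers _)) (xa_notMem_zpowers_a_one _)
  · rw [zpowers_xa_eq_zpowers_xa_iff, proj_natCast_val, proj_natCast_val] at h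
    exact congrArg Sum.inr h

theorem exists_cyclicSubgroup_eq {H : Subgroup (QuaternionGroup m)} (hH : IsCyclic H) :
    ∃ x, cyclicSubgroup x = H := by
  rcases (isCyclic_iff_le_zpowers_a_one_or_eq_zpowers_xa H).mp hH with h | ⟨u, rfl⟩
  · exact ⟨.inl ⟨H, h⟩, rfl⟩
  · refine ⟨.inr (proj m u), ?_⟩
    rw [cyclicSubgroup, zpowers_xa_eq_zpowers_xa_iff, proj_natCast_val]

noncomputable def cyclicSubgroupEquiv :
    CyclicIndex m ≃ {H : Subgroup (QuaternionGroup m) // IsCyclic H} :=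
  Equiv.ofBijective
    (fun x => ⟨cyclicSubgroup x, (isCyclic_iff_le_zpowers_a_one_or_eq_zpowers_xa _).mpr <| by
      rcases x with H | i
      exacts [.inl H.2, .inr ⟨_, rfl⟩]⟩)
    ⟨fun _ _ h => cyclicSubgroup_injective (congrArg Subtype.val h),
      fun H => (exists_cyclicSubgroup_eq H.2).imp fun _ h => Subtype.ext h⟩

def Permutes : CyclicIndex m → CyclicIndex m → Prop
  | .inr i, .inr j => 2 * (j - i) = 0
  | _, _ => True

theorem cyclicSubgroup_mul_comm_iff (x y : CyclicIndex m) :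
    (cyclicSubgroup x : Set (QuaternionGroup m)) * (cyclicSubgroup y : Set (QuaternionGroup m)) =
        (cyclicSubgroup y : Set (QuaternionGroup m)) *
          (cyclicSubgroup x : Set (QuaternionGroup m)) ↔
      Permutes x y := by
  rcases x with H | i
  · have := normal_of_le_zpowers_a_one H.2
    exact iff_of_true (set_mul_normal_comm _ H.1).symm trivial
  rcases y with K | j
  · have := normal_of_le_zpowers_a_one K.2
    exact iff_of_true (set_mul_normal_comm _ K.1) trivial
  · rw [cyclicSubgroup, cyclicSubgroup, zpowers_xa_mul_comm_iff, proj_natCast_val,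
      proj_natCast_val, Permutes]

theorem natCard_subgroups_le_zpowers_a_one :
    Nat.card {H : Subgroup (QuaternionGroup m) // H ≤ zpowers (a 1)} = (2 * m).divisors.card := by
  rw [natCard_subgroups_le_zpowers (isOfFinOrder_of_finite _), orderOf_a_one]

theorem natCard_cyclicIndex : Nat.card (CyclicIndex m) = (2 * m).divisors.card + m := by
  rw [Nat.card_sum, natCard_subgroups_le_zpowers_a_one, Nat.card_zmod]

theorem natCard_permutes_inl (H : {H : Subgroup (QuaternionGroup m) // H ≤ zpowers (a 1)}) :
    Nat.card {y : CyclicIndex m // Permutes (.inl H) y} = (2 * m).divisors.card + m := by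
  rw [← natCard_cyclicIndex]
  exact Nat.card_congr (Equiv.subtypeUnivEquiv fun _ => trivial)

theorem natCard_permutes_inr (i : ZMod m) :
    Nat.card {y : CyclicIndex m // Permutes (.inr i) y} = (2 * m).divisors.card + m.gcd 2 := by
  have torsion :
      {j : ZMod m // 2 * (j - i) = 0} ≃ (nsmulAddMonoidHom 2 : ZMod m →+ ZMod m).ker :=
    (Equiv.subRight i).subtypeEquiv fun j => by simp [two_mul]
  rw [Nat.card_congr Equiv.subtypeSum, Nat.card_sum]
  simp only [Permutes]
  rw [Nat.card_congr (Equiv.subtypeUnivEquiv fun _ => trivial), natCard_subgroups_le_zpowers_a_one,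
    Nat.card_congr torsion, IsAddCyclic.card_nsmulAddMonoidHom_ker, Nat.card_zmod]

theorem natCard_permutes :
    Nat.card {p : CyclicIndex m × CyclicIndex m // Permutes p.1 p.2} =
      (2 * m).divisors.card * ((2 * m).divisors.card + m) +
        m * ((2 * m).divisors.card + m.gcd 2) := by
  have := Fintype.ofFinite {H : Subgroup (QuaternionGroup m) // H ≤ zpowers (a 1)}
  rw [Nat.card_congr (Equiv.subtypeProdEquivSigmaSubtype fun x y => Permutes x y), Nat.card_sigma,
    Fintype.sum_sum_type]
  simp only [natCard_permutes_inl, natCard_permutes_inr, Finset.sum_const, Finset.card_univ,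
    smul_eq_mul]
  rw [← Nat.card_eq_fintype_card, natCard_subgroups_le_zpowers_a_one, ZMod.card]

variable (m) in
theorem csd_eq :
    csd (QuaternionGroup m) =
      ((2 * m).divisors.card * ((2 * m).divisors.card + m) +
        m * ((2 * m).divisors.card + m.gcd 2) : ℕ) / ((2 * m).divisors.card + m : ℕ) ^ 2 := by
  rw [csd_eq_of_equiv cyclicSubgroupEquiv Permutes cyclicSubgroup_mul_comm_iff, natCard_permutes,
    natCard_cyclicIndex]

end NeZero

theorem csd_two_pow (k : ℕ) :
    csd (QuaternionGroup (2 ^ (k + 1))) =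
      (((k : ℚ) + 3) ^ 2 + ((k : ℚ) + 4) * 2 ^ (k + 2)) /
        ((k : ℚ) + 3 + 2 ^ (k + 1)) ^ 2 := by
  have card_divisors : (2 * 2 ^ (k + 1)).divisors.card = k + 3 := by
    rw [← pow_succ', Nat.divisors_prime_pow Nat.prime_two, Finset.card_map, Finset.card_range]
  have gcd_two : (2 ^ (k + 1)).gcd 2 = 2 := Nat.gcd_eq_right (dvd_pow_self 2 k.succ_ne_zero)
  rw [csd_eq, card_divisors, gcd_two]
  push_cast
  ring

end QuaternionGroup

theorem stmt_11 (n : ℕ) (hn : 3 ≤ n) :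
    csd (QuaternionGroup (2 ^ (n - 2))) =
      ((n : ℚ) ^ 2 + ((n : ℚ) + 1) * 2 ^ (n - 1)) / ((n : ℚ) + 2 ^ (n - 2)) ^ 2 ∧
    csd (QuaternionGroup 4) = 7 / 8 := by
  refine ⟨?_, (QuaternionGroup.csd_two_pow 1).trans (by norm_num)⟩
  obtain ⟨k, rfl⟩ : ∃ k, n = k + 3 := ⟨n - 3, by omega⟩
  rw [show k + 3 - 2 = k + 1 by omega, show k + 3 - 1 = k + 2 by omega,
    QuaternionGroup.csd_two_pow]
  push_cast
  ring
end

section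
/- The sequence csd(S_{2^n}), where S_{2^n} is the quasi-dihedral group of order 2^n (n ≥ 4), converges to 0 as n → ∞. -/
/-!
Let `N = ⟨x⟩`, a cyclic subgroup of index 2 in `S_{2^n}`. Every element outside `N` has order
at most 4, so there are at least `2^n / 8` cyclic subgroups, whereas the cyclic 2-group `N` has
only `n` subgroups. If `g, k ∉ N` and `⟨g⟩⟨k⟩ = ⟨k⟩⟨g⟩`, this product is a subgroup of order at
most 16, so `gk` is one of the at most 16 elements `a ∈ N` with `a ^ 16 = 1`; as `gk` determines
`k`, each `⟨g⟩ ⊄ N` permutes with at most 16 cyclic subgroups outside `N`. Hence at most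
`(2n + 16) |L₁(G)|` pairs permute, and `csd(S_{2^n}) ≤ (2n + 16) / |L₁(G)| = O(n / 2^n)`.
-/

open Pointwise

open Subgroup

theorem Set.ncard_le_mul_ncard_of_mapsTo {α β : Type*} {s : Set α} {t : Set β} {f : α → β}
    (hs : s.Finite) (ht : t.Finite) (hf : Set.MapsTo f s t) (n : ℕ)
    (hn : ∀ b ∈ t, {a ∈ s | f a = b}.ncard ≤ n) : s.ncard ≤ n * t.ncard := by
  classical
  lift s to Finset α using hs
  lift t to Finset β using ht
  simp only [Set.ncard_coe_finset]
  refine Finset.card_le_mul_card_image_of_maps_to hf n fun b hb => ?_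
  rw [← Set.ncard_coe_finset, Finset.coe_filter]
  exact hn b hb

namespace Subgroup

variable {G : Type*} [Group G] [Finite G]

theorem natCard_sup_le_of_coe_mul_comm {H K : Subgroup G} (hHK : (H : Set G) * K = K * H) :
    Nat.card ↥(H ⊔ K) ≤ Nat.card H * Nat.card K := by
  let HK : Subgroup G :=
    { carrier := H * K
      mul_mem' := fun {a b} ha hb => by
        have hclosed : (H : Set G) * K * (H * K) = H * K :=
          calc (H : Set G) * K * (H * K) = H * (K * H) * K := by simp only [mul_assoc]
            _ = H * H * (K * K) := by rw [← hHK]; simp only [mul_assoc]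
            _ = H * K := by rw [coe_mul_coe, coe_mul_coe]
        exact hclosed ▸ Set.mul_mem_mul ha hb
      one_mem' := ⟨1, H.one_mem, 1, K.one_mem, one_mul 1⟩
      inv_mem' := fun {a} ha => by
        obtain ⟨h, hh, k, hk, rfl⟩ := ha
        rw [mul_inv_rev, hHK]
        exact Set.mul_mem_mul (K.inv_mem hk) (H.inv_mem hh) }
  have hle : H ⊔ K ≤ HK :=
    sup_le (fun h hh => ⟨h, hh, 1, K.one_mem, mul_one h⟩)
      fun k hk => ⟨1, H.one_mem, k, hk, one_mul k⟩
  calc Nat.card ↥(H ⊔ K) ≤ Nat.card HK := card_le_of_le hle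
    _ ≤ Nat.card H * Nat.card K := Set.natCard_mul_le

theorem ncard_pow_eq_one_le (N : Subgroup G) [IsCyclic N] {c : ℕ} (hc : 0 < c) :
    {a : G | a ∈ N ∧ a ^ c = 1}.ncard ≤ c := by
  classical
  have : Fintype N := Fintype.ofFinite N
  have himage : {a : G | a ∈ N ∧ a ^ c = 1} = Subtype.val '' {b : N | b ^ c = 1} := by
    ext a
    constructor
    · rintro ⟨ha, hac⟩
      exact ⟨⟨a, ha⟩, Subtype.ext hac, rfl⟩
    · rintro ⟨b, hb, rfl⟩
      exact ⟨b.2, congrArg Subtype.val hb⟩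
  rw [himage, Set.ncard_image_of_injective _ Subtype.val_injective, Set.ncard_eq_toFinset_card']
  simpa using IsCyclic.card_pow_eq_one_le hc

theorem eq_of_le_of_natCard_eq {N H K : Subgroup G} [IsCyclic N] (hH : H ≤ N) (hK : K ≤ N)
    (hHK : Nat.card H = Nat.card K) : H = K := by
  -- in a cyclic group the subgroup of order `c` is the set of solutions of `a ^ c = 1`
  suffices key : ∀ L ≤ N, Nat.card L = Nat.card K →
      (L : Set G) = {a | a ∈ N ∧ a ^ Nat.card K = 1} from
    SetLike.coe_injective ((key H hH hHK).trans (key K hK rfl).symm)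
  intro L hL hLK
  refine Set.eq_of_subset_of_ncard_le (fun a ha => ⟨hL ha, ?_⟩) ?_ (Set.toFinite _)
  · exact orderOf_dvd_iff_pow_eq_one.1 (hLK ▸ orderOf_dvd_natCard L ha)
  · calc {a | a ∈ N ∧ a ^ Nat.card K = 1}.ncard ≤ Nat.card K :=
          ncard_pow_eq_one_le N Nat.card_pos
      _ = (L : Set G).ncard := by rw [← hLK, ← Nat.card_coe_set_eq, SetLike.coe_sort_coe]

theorem ncard_subgroups_le_card_divisors (N : Subgroup G) [IsCyclic N] :
    {H : Subgroup G | H ≤ N}.ncard ≤ (Nat.card N).divisors.card := by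
  rw [← Set.ncard_coe_finset]
  refine Set.ncard_le_ncard_of_injOn (fun H => Nat.card H) (fun H hH => ?_)
    (fun H hH K hK => eq_of_le_of_natCard_eq hH hK) (Set.toFinite _)
  exact Nat.mem_divisors.2 ⟨card_dvd_of_le hH, Nat.card_pos.ne'⟩

end Subgroup

section PermutingPairs

variable {G : Type*} [Group G] [Finite G]

theorem ncard_permuting_pairs_le (N : Subgroup G) (m : ℕ)
    (hm : ∀ H : Subgroup G, IsCyclic H → ¬ H ≤ N →
      {K : Subgroup G | IsCyclic K ∧ ¬ K ≤ N ∧ (H : Set G) * K = K * H}.ncard ≤ m) :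
    {p : Subgroup G × Subgroup G |
        IsCyclic p.1 ∧ IsCyclic p.2 ∧ (p.1 : Set G) * p.2 = p.2 * p.1}.ncard ≤
      (2 * {H : Subgroup G | IsCyclic H ∧ H ≤ N}.ncard + m) *
        {H : Subgroup G | IsCyclic H}.ncard := by
  set C := {H : Subgroup G | IsCyclic H}
  set A := {H : Subgroup G | IsCyclic H ∧ H ≤ N}
  set B := {H : Subgroup G | IsCyclic H ∧ ¬ H ≤ N}
  set Q : Set (Subgroup G × Subgroup G) :=
    {p | p.1 ∈ B ∧ p.2 ∈ B ∧ (p.1 : Set G) * p.2 = p.2 * p.1}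
  have hsub : {p : Subgroup G × Subgroup G |
      IsCyclic p.1 ∧ IsCyclic p.2 ∧ (p.1 : Set G) * p.2 = p.2 * p.1} ⊆ A ×ˢ C ∪ C ×ˢ A ∪ Q := by
    rintro ⟨H, K⟩ ⟨hH, hK, hHK⟩
    by_cases hHN : H ≤ N
    · exact Or.inl (Or.inl ⟨⟨hH, hHN⟩, hK⟩)
    by_cases hKN : K ≤ N
    · exact Or.inl (Or.inr ⟨hH, hK, hKN⟩)
    exact Or.inr ⟨⟨hH, hHN⟩, ⟨hK, hKN⟩, hHK⟩
  have hQ : Q.ncard ≤ m * B.ncard := by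
    refine Set.ncard_le_mul_ncard_of_mapsTo (Set.toFinite _) (Set.toFinite _)
      (fun p hp => hp.1) m fun H hH => ?_
    have hfiber : {p ∈ Q | p.1 = H} =
        Prod.mk H '' {K : Subgroup G | IsCyclic K ∧ ¬ K ≤ N ∧ (H : Set G) * K = K * H} := by
      ext ⟨H', K⟩
      simp only [Set.mem_ofPred_eq, Set.mem_image, Prod.mk.injEq]
      constructor
      · rintro ⟨⟨-, hK, hHK⟩, rfl⟩
        exact ⟨K, ⟨hK.1, hK.2, hHK⟩, rfl, rfl⟩
      · rintro ⟨K, ⟨hK, hKN, hHK⟩, rfl, rfl⟩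
        exact ⟨⟨hH, ⟨hK, hKN⟩, hHK⟩, rfl⟩
    rw [hfiber, Set.ncard_image_of_injective _ (Prod.mk_right_injective H)]
    exact hm H hH.1 hH.2
  have hBC : B.ncard ≤ C.ncard := Set.ncard_le_ncard fun H hH => hH.1
  calc _ ≤ (A ×ˢ C ∪ C ×ˢ A ∪ Q).ncard := Set.ncard_le_ncard hsub (Set.toFinite _)
    _ ≤ (A ×ˢ C).ncard + (C ×ˢ A).ncard + Q.ncard :=
      (Set.ncard_union_le _ _).trans (Nat.add_le_add_right (Set.ncard_union_le _ _) _)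
    _ ≤ (2 * A.ncard + m) * C.ncard := by
      rw [Set.ncard_prod, Set.ncard_prod]
      nlinarith

theorem csd_le_of_ncard_permuting_le (N : Subgroup G) (m : ℕ)
    (hm : ∀ H : Subgroup G, IsCyclic H → ¬ H ≤ N →
      {K : Subgroup G | IsCyclic K ∧ ¬ K ≤ N ∧ (H : Set G) * K = K * H}.ncard ≤ m) :
    csd G ≤ ((2 * {H : Subgroup G | IsCyclic H ∧ H ≤ N}.ncard + m : ℕ) : ℚ) /
      {H : Subgroup G | IsCyclic H}.ncard := by
  have hC : 0 < {H : Subgroup G | IsCyclic H}.ncard :=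
    (Set.ncard_pos (Set.toFinite _)).2 ⟨⊥, inferInstanceAs (IsCyclic (⊥ : Subgroup G))⟩
  unfold csd
  rw [← Set.coe_ofPred, ← Set.coe_ofPred, Nat.card_coe_set_eq, Nat.card_coe_set_eq,
    div_le_div_iff₀ (by positivity) (by positivity)]
  calc _ ≤ ((2 * {H : Subgroup G | IsCyclic H ∧ H ≤ N}.ncard + m) *
        {H : Subgroup G | IsCyclic H}.ncard : ℕ) * ({H : Subgroup G | IsCyclic H}.ncard : ℚ) := by
        gcongr
        exact ncard_permuting_pairs_le N m hm
    _ = _ := by push_cast; ring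

end PermutingPairs

/-- `x` and `y` generate the quasi-dihedral group of order `2 ^ (r + 2)` (the paper's `n` is
`r + 2`, which keeps the exponents free of truncated subtraction). -/
structure IsQuasiDihedralGenerators {G : Type*} [Group G] (r : ℕ) (x y : G) : Prop where
  orderOf_x : orderOf x = 2 ^ (r + 1)
  orderOf_y : orderOf y = 2
  conj_x : y⁻¹ * x * y = x ^ (2 ^ r - 1)
  sup_eq_top : zpowers x ⊔ zpowers y = ⊤
  card_eq : Nat.card G = 2 ^ (r + 2)

namespace IsQuasiDihedralGenerators

variable {G : Type*} [Group G] {r : ℕ} {x y : G}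

theorem index_zpowers (h : IsQuasiDihedralGenerators r x y) : (zpowers x).index = 2 := by
  have hmul := (zpowers x).card_mul_index
  rw [Nat.card_zpowers, h.orderOf_x, h.card_eq, pow_succ 2 (r + 1)] at hmul
  exact Nat.eq_of_mul_eq_mul_left (by positivity) hmul

theorem y_not_mem (h : IsQuasiDihedralGenerators r x y) : y ∉ zpowers x := by
  intro hy
  have htop : zpowers x = ⊤ := by rw [← h.sup_eq_top, sup_eq_left.2 (zpowers_le.2 hy)]
  have := h.index_zpowers
  rw [htop, index_top] at this
  omega

theorem mul_mem_zpowers (h : IsQuasiDihedralGenerators r x y) {g k : G} (hg : g ∉ zpowers x)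
    (hk : k ∉ zpowers x) : g * k ∈ zpowers x :=
  (mul_mem_iff_of_index_two h.index_zpowers).2 (iff_of_false hg hk)

theorem pow_four_eq_one [Finite G] (h : IsQuasiDihedralGenerators r x y) {g : G}
    (hg : g ∉ zpowers x) : g ^ 4 = 1 := by
  obtain ⟨a, ha⟩ := (Submonoid.mem_powers_iff _ _).1
    (mem_powers_iff_mem_zpowers.2 (h.mul_mem_zpowers hg h.y_not_mem))
  have hy2 : y * y = 1 := by rw [← sq, ← h.orderOf_y, pow_orderOf_eq_one]
  have hconj : y⁻¹ * x ^ a * y = x ^ ((2 ^ r - 1) * a) := by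
    have hc := conj_pow (i := a) (a := y⁻¹) (b := x)
    rw [inv_inv] at hc
    rw [pow_mul, ← h.conj_x, hc]
  have hsq : g ^ 2 = x ^ (2 ^ r * a) := by
    have hg' : g = x ^ a * y⁻¹ := by rw [ha, mul_inv_cancel_right]
    calc g ^ 2 = x ^ a * (y⁻¹ * x ^ a * y) * (y * y)⁻¹ := by rw [hg', sq]; group
      _ = x ^ (a + (2 ^ r - 1) * a) := by rw [hconj, hy2, inv_one, mul_one, pow_add]
      _ = x ^ (2 ^ r * a) := by
        rw [Nat.sub_one_mul, Nat.add_sub_cancel' (Nat.le_mul_of_pos_left a (by positivity))]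
  calc g ^ 4 = (x ^ orderOf x) ^ a := by
        rw [show 4 = 2 * 2 from rfl, pow_mul, hsq, ← pow_mul, ← pow_mul, h.orderOf_x, pow_succ]
        ring_nf
    _ = 1 := by rw [pow_orderOf_eq_one, one_pow]

theorem orderOf_le_four [Finite G] (h : IsQuasiDihedralGenerators r x y) {g : G}
    (hg : g ∉ zpowers x) : orderOf g ≤ 4 :=
  orderOf_le_of_pow_eq_one (by norm_num) (h.pow_four_eq_one hg)

theorem ncard_cyclic_subgroups_le_zpowers_le [Finite G] (h : IsQuasiDihedralGenerators r x y) :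
    {H : Subgroup G | IsCyclic H ∧ H ≤ zpowers x}.ncard ≤ r + 2 :=
  calc _ ≤ {H : Subgroup G | H ≤ zpowers x}.ncard :=
        Set.ncard_le_ncard (fun H hH => hH.2) (Set.toFinite _)
    _ ≤ (Nat.card (zpowers x)).divisors.card := ncard_subgroups_le_card_divisors _
    _ = r + 2 := by
      rw [Nat.card_zpowers, h.orderOf_x, Nat.divisors_prime_pow Nat.prime_two, Finset.card_map,
        Finset.card_range]

theorem ncard_permuting_le [Finite G] (h : IsQuasiDihedralGenerators r x y) {H : Subgroup G}
    (hH : IsCyclic H) (hHN : ¬ H ≤ zpowers x) :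
    {K : Subgroup G | IsCyclic K ∧ ¬ K ≤ zpowers x ∧ (H : Set G) * K = K * H}.ncard ≤ 16 := by
  obtain ⟨g, rfl⟩ := (H.isCyclic_iff_exists_zpowers_eq_top).1 hH
  have hg : g ∉ zpowers x := fun hg => hHN (zpowers_le.2 hg)
  -- `⟨k⟩` is determined by `g * k`, an element of `⟨x⟩` whose order divides `16`
  have hsub : {K : Subgroup G |
        IsCyclic K ∧ ¬ K ≤ zpowers x ∧ (zpowers g : Set G) * K = K * zpowers g} ⊆
      (fun a => zpowers (g⁻¹ * a)) '' {a : G | a ∈ zpowers x ∧ a ^ 16 = 1} := by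
    rintro K ⟨hK, hKN, hgK⟩
    obtain ⟨k, rfl⟩ := (K.isCyclic_iff_exists_zpowers_eq_top).1 hK
    have hk : k ∉ zpowers x := fun hk => hKN (zpowers_le.2 hk)
    have hsup : Nat.card ↥(zpowers g ⊔ zpowers k) ∣ 2 ^ 4 := by
      have hle : Nat.card ↥(zpowers g ⊔ zpowers k) ≤ 4 * 4 := by
        refine (natCard_sup_le_of_coe_mul_comm hgK).trans ?_
        rw [Nat.card_zpowers, Nat.card_zpowers]
        exact Nat.mul_le_mul (h.orderOf_le_four hg) (h.orderOf_le_four hk)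
      obtain ⟨j, -, hj⟩ := (Nat.dvd_prime_pow Nat.prime_two).1
        (h.card_eq ▸ card_subgroup_dvd_card (zpowers g ⊔ zpowers k))
      rw [hj] at hle ⊢
      exact pow_dvd_pow 2 ((Nat.pow_le_pow_iff_right (by norm_num)).1 hle)
    have hgk : g * k ∈ zpowers g ⊔ zpowers k :=
      mul_mem (mem_sup_left (mem_zpowers g)) (mem_sup_right (mem_zpowers k))
    refine ⟨g * k, ⟨h.mul_mem_zpowers hg hk, ?_⟩, by simp⟩
    exact orderOf_dvd_iff_pow_eq_one.1 ((orderOf_dvd_natCard _ hgk).trans hsup)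
  calc _ ≤ _ := Set.ncard_le_ncard hsub (Set.toFinite _)
    _ ≤ _ := Set.ncard_image_le (Set.toFinite _)
    _ ≤ 16 := ncard_pow_eq_one_le _ (by norm_num)

theorem two_pow_le_four_mul_ncard_cyclic [Finite G] (h : IsQuasiDihedralGenerators r x y) :
    2 ^ (r + 1) ≤ 4 * {H : Subgroup G | IsCyclic H}.ncard := by
  have hcompl : ((zpowers x : Set G)ᶜ).ncard = 2 ^ (r + 1) := by
    have hsum := Set.ncard_add_ncard_compl (zpowers x : Set G)
    rw [← Nat.card_coe_set_eq, SetLike.coe_sort_coe, Nat.card_zpowers, h.orderOf_x, h.card_eq,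
      pow_succ 2 (r + 1)] at hsum
    omega
  rw [← hcompl]
  refine Set.ncard_le_mul_ncard_of_mapsTo (f := zpowers) (Set.toFinite _) (Set.toFinite _)
    (fun g _ => inferInstanceAs (IsCyclic (zpowers g))) 4 fun H _ => ?_
  rcases Set.eq_empty_or_nonempty {g ∈ (zpowers x : Set G)ᶜ | zpowers g = H} with
    hempty | ⟨g₀, hg₀, rfl⟩
  · rw [hempty, Set.ncard_empty]
    exact Nat.zero_le 4
  · calc _ ≤ (zpowers g₀ : Set G).ncard :=
          Set.ncard_le_ncard (fun g (hg : _ ∧ zpowers g = zpowers g₀) => hg.2 ▸ mem_zpowers g)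
            (Set.toFinite _)
      _ = orderOf g₀ := by rw [← Nat.card_coe_set_eq, SetLike.coe_sort_coe, Nat.card_zpowers]
      _ ≤ 4 := h.orderOf_le_four hg₀

theorem csd_le [Finite G] (h : IsQuasiDihedralGenerators r x y) :
    csd G ≤ (16 * (r + 2) + 128) / 2 ^ (r + 2) := by
  refine (csd_le_of_ncard_permuting_le (zpowers x) 16
    fun H hH hHN => h.ncard_permuting_le hH hHN).trans ?_
  have hA : ({H : Subgroup G | IsCyclic H ∧ H ≤ zpowers x}.ncard : ℚ) ≤ r + 2 := by
    exact_mod_cast h.ncard_cyclic_subgroups_le_zpowers_le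
  have hD : (2 : ℚ) ^ (r + 1) ≤ 4 * {H : Subgroup G | IsCyclic H}.ncard := by
    exact_mod_cast h.two_pow_le_four_mul_ncard_cyclic
  have hD0 : (0 : ℚ) < {H : Subgroup G | IsCyclic H}.ncard := by
    have : (0 : ℚ) < 2 ^ (r + 1) := by positivity
    linarith
  rw [div_le_div_iff₀ hD0 (by positivity)]
  push_cast
  calc (2 * ({H : Subgroup G | IsCyclic H ∧ H ≤ zpowers x}.ncard : ℚ) + 16) * 2 ^ (r + 2)
      ≤ (2 * (r + 2) + 16) * (8 * {H : Subgroup G | IsCyclic H}.ncard) := by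
        gcongr
        rw [pow_succ]
        linarith
    _ = _ := by ring

end IsQuasiDihedralGenerators

theorem stmt_14 (G : ℕ → Type*) [∀ n, Group (G n)] [∀ n, Fintype (G n)]
    (hG : ∀ n, 4 ≤ n → ∃ x y : G n, orderOf x = 2 ^ (n - 1) ∧ orderOf y = 2 ∧
      y⁻¹ * x * y = x ^ (2 ^ (n - 2) - 1) ∧
      Subgroup.zpowers x ⊔ Subgroup.zpowers y = ⊤ ∧ Nat.card (G n) = 2 ^ n) :
    Filter.Tendsto (fun n => (csd (G n) : ℝ)) Filter.atTop (nhds 0) := by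
  have hle : ∀ᶠ n in Filter.atTop,
      (csd (G n) : ℝ) ≤ 16 * ((n : ℝ) ^ 1 / 2 ^ n) + 128 * ((n : ℝ) ^ 0 / 2 ^ n) := by
    filter_upwards [Filter.eventually_ge_atTop 4] with n hn
    obtain ⟨r, rfl⟩ : ∃ r, n = r + 2 := ⟨n - 2, by omega⟩
    obtain ⟨x, y, hx, hy, hxy, hsup, hcard⟩ := hG (r + 2) hn
    have h : IsQuasiDihedralGenerators r x y := ⟨hx, hy, hxy, hsup, hcard⟩
    calc (csd (G (r + 2)) : ℝ) ≤ (((16 * (r + 2) + 128) / 2 ^ (r + 2) : ℚ) : ℝ) := by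
          exact_mod_cast h.csd_le
      _ = _ := by push_cast; ring
  have hlim : Filter.Tendsto
      (fun n : ℕ => 16 * ((n : ℝ) ^ 1 / 2 ^ n) + 128 * ((n : ℝ) ^ 0 / 2 ^ n))
      Filter.atTop (nhds 0) := by
    simpa using ((tendsto_pow_const_div_const_pow_of_one_lt 1 one_lt_two).const_mul 16).add
      ((tendsto_pow_const_div_const_pow_of_one_lt 0 one_lt_two).const_mul 128)
  exact squeeze_zero' (.of_forall fun n => Rat.cast_nonneg.2 (by unfold csd; positivity)) hle hlim
end

section
/- For n ≥ 2, the group ℤ_{2^n} × Q₈ (direct product of the cyclic group of order 2^n with the quaternion group of order 8) has exactly 8n + 2 cyclic subgroups, i.e. |L₁(ℤ_{2^n} × Q₈)| = 8n + 2. -/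
open Pointwise

/-!
Each cyclic subgroup of order `d` has exactly `φ d` generators, so `φ d` times the number of
cyclic subgroups of order `d` is the number of elements of order `d`. In a `2`-group the elements
of order `2 ^ (k + 1)` are the solutions of `g ^ 2 ^ (k + 1) = 1` that do not solve
`g ^ 2 ^ k = 1`, and in `ℤ_{2^n} × Q₈` the equation `g ^ 2 ^ k = 1` (`k ≤ n`) has `2 ^ k` times as
many solutions as in `Q₈`, that is `1`, `4` and `2 ^ k * 8` for `k = 0`, `k = 1` and `k ≥ 2`.
Hence there are `1`, `3`, `14` and `8` cyclic subgroups of order `1`, `2`, `4` and `2 ^ k`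
(`3 ≤ k ≤ n`), and `1 + 3 + 14 + 8 (n - 2) = 8 n + 2`.
-/

open Subgroup

section CyclicSubgroups

variable {G : Type*} [Group G]

theorem zpowers_eq_iff_mem_and_orderOf_eq {H : Subgroup G} [Finite H] {g : G} :
    zpowers g = H ↔ g ∈ H ∧ orderOf g = Nat.card H := by
  constructor
  · rintro rfl
    exact ⟨mem_zpowers g, (Nat.card_zpowers g).symm⟩
  · rintro ⟨hg, hord⟩
    exact eq_of_le_of_card_ge (zpowers_le.mpr hg) (by rw [Nat.card_zpowers, hord])

theorem card_generators_eq_totient (H : Subgroup G) [Finite H] [IsCyclic H] :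
    Nat.card {g : G // zpowers g = H} = (Nat.card H).totient := by
  classical
  have : Fintype H := Fintype.ofFinite H
  calc Nat.card {g : G // zpowers g = H}
      = Nat.card {x : H // orderOf x = Nat.card H} :=
        Nat.card_congr <|
          (Equiv.subtypeEquivRight fun _ => zpowers_eq_iff_mem_and_orderOf_eq).trans <|
          (Equiv.subtypeSubtypeEquivSubtypeInter (· ∈ H) (orderOf · = Nat.card H)).symm.trans <|
          Equiv.subtypeEquivRight fun _ => by rw [orderOf_coe]
    _ = (Nat.card H).totient := by
        rw [Nat.card_eq_fintype_card, Fintype.card_subtype, Nat.card_eq_fintype_card,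
          IsCyclic.card_orderOf_eq_totient dvd_rfl]

variable [Finite G]

theorem totient_mul_card_cyclic_subgroups (d : ℕ) :
    d.totient * Nat.card {H : Subgroup G // IsCyclic H ∧ Nat.card H = d} =
      Nat.card {g : G // orderOf g = d} := by
  classical
  have : Fintype (Subgroup G) := Fintype.ofFinite _
  let gen : {g : G // orderOf g = d} → {H : Subgroup G // IsCyclic H ∧ Nat.card H = d} :=
    fun g => ⟨zpowers g, inferInstance, by rw [Nat.card_zpowers, g.2]⟩
  have fiber (H : {H : Subgroup G // IsCyclic H ∧ Nat.card H = d}) :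
      Nat.card {g // gen g = H} = d.totient := by
    have : IsCyclic H.1 := H.2.1
    calc Nat.card {g // gen g = H} = Nat.card {g : G // zpowers g = H.1} :=
          Nat.card_congr <| ((Equiv.subtypeEquivRight fun g => Subtype.ext_iff).trans
            (Equiv.subtypeSubtypeEquivSubtypeInter _ (fun g => zpowers g = H.1))).trans
            (Equiv.subtypeEquivRight fun g => and_iff_right_of_imp fun h => by
              rw [← H.2.2, ← h, Nat.card_zpowers])
      _ = d.totient := by rw [card_generators_eq_totient, H.2.2]
  rw [← Nat.card_congr (Equiv.sigmaFiberEquiv gen), Nat.card_sigma, Finset.sum_congr rfl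
    fun H _ => fiber H, Finset.sum_const, Finset.card_univ, ← Nat.card_eq_fintype_card,
    smul_eq_mul, mul_comm]

theorem card_cyclic_subgroups_eq_sum (s : Finset ℕ) (hs : ∀ g : G, orderOf g ∈ s) :
    Nat.card {H : Subgroup G // IsCyclic H} =
      ∑ d ∈ s, Nat.card {H : Subgroup G // IsCyclic H ∧ Nat.card H = d} := by
  classical
  have : Fintype (Subgroup G) := Fintype.ofFinite _
  simp only [Nat.card_eq_fintype_card, Fintype.card_subtype]
  refine (Finset.card_eq_sum_card_fiberwise fun H hH => ?_).trans
    (Finset.sum_congr rfl fun d _ => by rw [Finset.filter_filter])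
  obtain ⟨g, rfl⟩ := (Subgroup.isCyclic_iff_exists_zpowers_eq_top H).mp (Finset.mem_filter.mp hH).2
  simpa [Nat.card_zpowers] using hs g

end CyclicSubgroups

theorem card_pow_eq_one_prod {M N : Type*} [Monoid M] [Monoid N] (m : ℕ) :
    Nat.card {p : M × N // p ^ m = 1} =
      Nat.card {x : M // x ^ m = 1} * Nat.card {y : N // y ^ m = 1} := by
  rw [← Nat.card_prod {x : M // x ^ m = 1} {y : N // y ^ m = 1}]
  exact Nat.card_congr <|
    (Equiv.subtypeEquivRight fun p : M × N => show p ^ m = 1 ↔ p.1 ^ m = 1 ∧ p.2 ^ m = 1 from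
      Prod.ext_iff).trans (Equiv.subtypeProdEquivProd (p := (· ^ m = 1)) (q := (· ^ m = 1)))

theorem IsCyclic.card_pow_eq_one {G : Type*} [CommGroup G] [IsCyclic G] [Finite G] (m : ℕ) :
    Nat.card {g : G // g ^ m = 1} = (Nat.card G).gcd m :=
  IsCyclic.card_powMonoidHom_ker G m ▸ Nat.card_congr (Equiv.subtypeEquivRight fun _ => Iff.rfl)

theorem card_orderOf_eq_prime_pow_succ_add {M : Type*} [Monoid M] [Finite M] {p : ℕ}
    [hp : Fact p.Prime] (k : ℕ) :
    Nat.card {x : M // orderOf x = p ^ (k + 1)} + Nat.card {x : M // x ^ p ^ k = 1} =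
      Nat.card {x : M // x ^ p ^ (k + 1) = 1} := by
  classical
  have disjoint : Disjoint (fun x : M => orderOf x = p ^ (k + 1)) (fun x => x ^ p ^ k = 1) := by
    refine Pi.disjoint_iff.mpr fun x => Prop.disjoint_iff.mpr fun ⟨hord, hpow⟩ => ?_
    have := (Nat.pow_dvd_pow_iff_le_right hp.out.one_lt).mp (hord ▸ orderOf_dvd_of_pow_eq_one hpow)
    omega
  rw [← Nat.card_sum]
  refine Nat.card_congr <| (subtypeOrEquiv _ _ disjoint).symm.trans
    (Equiv.subtypeEquivRight fun x => ⟨?_, fun h => ?_⟩)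
  · rintro (h | h)
    · exact h ▸ pow_orderOf_eq_one x
    · rw [pow_succ, pow_mul, h, one_pow]
  · by_cases h' : x ^ p ^ k = 1
    · exact Or.inr h'
    · exact Or.inl (orderOf_eq_prime_pow h' h)

theorem card_cyclic_subgroups_card_eq_one {G : Type*} [Group G] [Finite G] :
    Nat.card {H : Subgroup G // IsCyclic H ∧ Nat.card H = 1} = 1 := by
  simpa [orderOf_eq_one_iff] using totient_mul_card_cyclic_subgroups (G := G) 1

theorem QuaternionGroup.pow_two_pow_eq_one (y : QuaternionGroup 2) {k : ℕ} (hk : 2 ≤ k) :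
    y ^ 2 ^ k = 1 := by
  obtain ⟨j, rfl⟩ := Nat.exists_eq_add_of_le hk
  have pow_four : ∀ y : QuaternionGroup 2, y ^ 2 ^ 2 = 1 := by decide
  rw [pow_add, pow_mul, pow_four, one_pow]

theorem QuaternionGroup.card_pow_two_eq_one :
    Nat.card {y : QuaternionGroup 2 // y ^ 2 = 1} = 2 := by
  rw [Nat.card_eq_fintype_card]
  decide

theorem QuaternionGroup.card_pow_two_pow_eq_one {k : ℕ} (hk : 2 ≤ k) :
    Nat.card {y : QuaternionGroup 2 // y ^ 2 ^ k = 1} = 8 := by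
  rw [Nat.card_congr (Equiv.subtypeUnivEquiv fun y => y.pow_two_pow_eq_one hk),
    Nat.card_eq_fintype_card, QuaternionGroup.card]

section CyclicTimesQuaternion

variable {A : Type*} [CommGroup A] [IsCyclic A] [Finite A] {n : ℕ}

theorem card_pow_eq_one_prod_of_dvd_card {B : Type*} [Monoid B] {m : ℕ} (hm : m ∣ Nat.card A) :
    Nat.card {g : A × B // g ^ m = 1} = m * Nat.card {y : B // y ^ m = 1} := by
  rw [card_pow_eq_one_prod, IsCyclic.card_pow_eq_one, Nat.gcd_eq_right hm]

theorem two_pow_mul_card_cyclic_subgroups_prod_add {B : Type*} [Group B] [Finite B]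
    (hA : Nat.card A = 2 ^ n) {k : ℕ} (hkn : k < n) :
    2 ^ k * Nat.card {H : Subgroup (A × B) // IsCyclic H ∧ Nat.card H = 2 ^ (k + 1)} +
        2 ^ k * Nat.card {y : B // y ^ 2 ^ k = 1} =
      2 ^ (k + 1) * Nat.card {y : B // y ^ 2 ^ (k + 1) = 1} := by
  rw [← card_pow_eq_one_prod_of_dvd_card (hA ▸ pow_dvd_pow 2 hkn.le),
    ← card_pow_eq_one_prod_of_dvd_card (hA ▸ pow_dvd_pow 2 hkn),
    ← card_orderOf_eq_prime_pow_succ_add,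
    ← totient_mul_card_cyclic_subgroups, Nat.totient_prime_pow_succ Nat.prime_two,
    Nat.add_one_sub_one, mul_one]

theorem card_cyclic_subgroups_prod_quaternion_card_eq_two (hA : Nat.card A = 2 ^ n) (hn : 1 ≤ n) :
    Nat.card {H : Subgroup (A × QuaternionGroup 2) // IsCyclic H ∧ Nat.card H = 2} = 3 := by
  have h := two_pow_mul_card_cyclic_subgroups_prod_add (B := QuaternionGroup 2) hA (k := 0) hn
  simp only [zero_add, pow_zero, pow_one, one_mul, Nat.card_unique,
    QuaternionGroup.card_pow_two_eq_one] at h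
  omega

theorem card_cyclic_subgroups_prod_quaternion_card_eq_four (hA : Nat.card A = 2 ^ n)
    (hn : 2 ≤ n) :
    Nat.card {H : Subgroup (A × QuaternionGroup 2) // IsCyclic H ∧ Nat.card H = 4} = 14 := by
  have h := two_pow_mul_card_cyclic_subgroups_prod_add (B := QuaternionGroup 2) hA (k := 1) hn
  rw [QuaternionGroup.card_pow_two_pow_eq_one le_rfl] at h
  simp only [pow_one, Nat.reduceAdd, Nat.reducePow, QuaternionGroup.card_pow_two_eq_one] at h
  omega

theorem card_cyclic_subgroups_prod_quaternion_card_eq_two_pow_succ (hA : Nat.card A = 2 ^ n)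
    {k : ℕ} (hk : 2 ≤ k) (hkn : k < n) :
    Nat.card {H : Subgroup (A × QuaternionGroup 2) // IsCyclic H ∧ Nat.card H = 2 ^ (k + 1)} =
      8 := by
  have h := two_pow_mul_card_cyclic_subgroups_prod_add (B := QuaternionGroup 2) hA hkn
  rw [QuaternionGroup.card_pow_two_pow_eq_one hk,
    QuaternionGroup.card_pow_two_pow_eq_one (by omega)] at h
  set c := Nat.card {H : Subgroup (A × QuaternionGroup 2) // IsCyclic H ∧ Nat.card H = 2 ^ (k + 1)}
  rw [pow_succ] at h
  exact Nat.eq_of_mul_eq_mul_left (pow_pos two_pos k) (by linarith)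

theorem card_cyclic_subgroups_prod_quaternion (hA : Nat.card A = 2 ^ n) (hn : 2 ≤ n) :
    Nat.card {H : Subgroup (A × QuaternionGroup 2) // IsCyclic H} = 8 * n + 2 := by
  have orderOf_mem (g : A × QuaternionGroup 2) :
      orderOf g ∈ (Finset.range (n + 1)).image (2 ^ ·) := by
    have : g ^ 2 ^ n = 1 := Prod.ext (hA ▸ pow_card_eq_one') (g.2.pow_two_pow_eq_one hn)
    obtain ⟨j, hj, hord⟩ := (Nat.dvd_prime_pow Nat.prime_two).mp (orderOf_dvd_of_pow_eq_one this)
    exact Finset.mem_image.mpr ⟨j, Finset.mem_range.mpr (by omega), hord.symm⟩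
  rw [card_cyclic_subgroups_eq_sum _ orderOf_mem,
    Finset.sum_image fun _ _ _ _ h => Nat.pow_right_injective le_rfl h]
  suffices ∀ m, 2 ≤ m → m ≤ n → ∑ k ∈ Finset.range (m + 1),
      Nat.card {H : Subgroup (A × QuaternionGroup 2) // IsCyclic H ∧ Nat.card H = 2 ^ k} =
        8 * m + 2 from this n hn le_rfl
  intro m hm
  induction m, hm using Nat.le_induction with
  | base =>
    intro hn
    simp only [Finset.sum_range_succ, Finset.sum_range_zero, Nat.reducePow,
      card_cyclic_subgroups_card_eq_one,
      card_cyclic_subgroups_prod_quaternion_card_eq_two hA (by omega),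
      card_cyclic_subgroups_prod_quaternion_card_eq_four hA hn]
  | succ m hm ih =>
    intro hmn
    rw [Finset.sum_range_succ, ih (by omega),
      card_cyclic_subgroups_prod_quaternion_card_eq_two_pow_succ hA hm hmn]
    ring

end CyclicTimesQuaternion

theorem stmt_15 (n : ℕ) (hn : 2 ≤ n) :
    Nat.card {H : Subgroup (Multiplicative (ZMod (2 ^ n)) × QuaternionGroup 2) //
      IsCyclic ↥H} = 8 * n + 2 :=
  card_cyclic_subgroups_prod_quaternion
    (by rw [Nat.card_congr Multiplicative.toAdd, Nat.card_zmod]) hn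
end

section
/- For every constant c with 0 < c < 1 there exists a finite group G such that csd(G) > c while G is not an Iwasawa group, i.e., G has subgroups H and K with HK ≠ KH. Hence there is no constant c ∈ (0,1) such that csd(G) > c implies that G is an Iwasawa group. -/
open Pointwise

/-!
A normal subgroup permutes with every subgroup, so `csd G ≥ 1 - (N / t) ^ 2`, where `t` counts
the cyclic subgroups of `G` and `N` the non-normal ones. Take the central product
`G = D₈ ∘ C₂ₙ` with `n = 2 ^ m`, whose commutator subgroup is generated by the involution `z` of
the cyclic factor. Every subgroup containing `z` is normal, and if `g * g ≠ 1` then `g * g` is a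
nontrivial element of the cyclic `2`-group `C₂ₙ`, so `⟨g⟩` contains `z`. Hence every non-normal
cyclic subgroup is generated by one of the at most `8` solutions of `g * g = 1`, while the
subgroups of `C₂ₙ` give `t ≥ m + 2`; thus `csd G ≥ 1 - (8 / (m + 2)) ^ 2 → 1`. The two
reflections `x`, `y` of `D₈` do not commute, so `⟨x⟩⟨y⟩ ≠ ⟨y⟩⟨x⟩`.
-/

open Subgroup

section General

variable {G : Type*} [Group G]

lemma one_sub_sq_le_csd [Finite G] :
    1 - ({H : Subgroup G | IsCyclic H ∧ ¬ H.Normal}.ncard /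
      Nat.card {H : Subgroup G // IsCyclic H} : ℚ) ^ 2 ≤ csd G := by
  set C := {H : Subgroup G | IsCyclic H}
  set N := {H : Subgroup G | IsCyclic H ∧ ¬ H.Normal}
  have hNC : N ⊆ C := fun H hH => hH.1
  set P := {pr : Subgroup G × Subgroup G | IsCyclic pr.1 ∧
      IsCyclic pr.2 ∧ (pr.1 : Set G) * (pr.2 : Set G) = (pr.2 : Set G) * (pr.1 : Set G)}
  have hperm : C ×ˢ C \ N ×ˢ N ⊆ P := by
    rintro ⟨H, K⟩ ⟨⟨hH, hK⟩, hHK⟩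
    refine ⟨hH, hK, ?_⟩
    by_cases hHn : H.Normal
    · exact (set_mul_normal_comm (K : Set G) H).symm
    by_cases hKn : K.Normal
    · exact set_mul_normal_comm (H : Set G) K
    exact absurd ⟨⟨hH, hHn⟩, ⟨hK, hKn⟩⟩ hHK
  have hcount : Nat.card {H : Subgroup G // IsCyclic H} ^ 2 ≤ Nat.card {pr : Subgroup G ×
      Subgroup G // IsCyclic pr.1 ∧ IsCyclic pr.2 ∧
        (pr.1 : Set G) * (pr.2 : Set G) = (pr.2 : Set G) * (pr.1 : Set G)} + N.ncard ^ 2 := by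
    show C.ncard ^ 2 ≤ P.ncard + _
    have := Set.ncard_le_ncard hperm
    rw [Set.ncard_sdiff (Set.prod_mono hNC hNC), Set.ncard_prod, Set.ncard_prod] at this
    have := Set.ncard_le_ncard hNC
    have := Nat.mul_le_mul this this
    rw [sq, sq]
    omega
  have ht : 0 < Nat.card {H : Subgroup G // IsCyclic H} :=
    Nat.card_pos_iff.mpr ⟨⟨⟨⊥, Bot.isCyclic⟩⟩, inferInstance⟩
  rw [csd, div_pow, one_sub_div (by positivity),
    div_le_div_iff_of_pos_right (by positivity), sub_le_iff_le_add]
  exact_mod_cast hcount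

lemma card_divisors_orderOf_le_card_cyclic [Finite G] (g : G) :
    (orderOf g).divisors.card ≤ Nat.card {H : Subgroup G // IsCyclic H} := by
  classical
  have := Fintype.ofFinite {H : Subgroup G // IsCyclic H}
  rw [Nat.card_eq_fintype_card, ← Finset.card_univ]
  refine Finset.card_le_card_of_injOn (fun d => ⟨zpowers (g ^ (orderOf g / d)), inferInstance⟩)
    (fun _ _ => Finset.mem_univ _) fun d hd e he hde => ?_
  have card_eq : ∀ d ∈ (orderOf g).divisors, Nat.card (zpowers (g ^ (orderOf g / d))) = d := by
    intro d hd
    obtain ⟨hdvd, hg⟩ := Nat.mem_divisors.mp hd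
    have hquot : orderOf g / d ≠ 0 :=
      (Nat.div_ne_zero_iff_of_dvd hdvd).mpr ⟨hg, (Nat.pos_of_mem_divisors hd).ne'⟩
    rw [Nat.card_zpowers, orderOf_pow_of_dvd hquot (Nat.div_dvd_of_dvd hdvd),
      Nat.div_div_self hdvd hg]
  rw [← card_eq d hd, ← card_eq e he]
  exact congrArg (fun H : {H : Subgroup G // IsCyclic H} => Nat.card H.1) hde

lemma zpowers_mul_zpowers_ne {x y : G} (hx : x * x = 1) (hy : y * y = 1) (hxy : x * y ≠ y * x) :
    (zpowers x : Set G) * zpowers y ≠ zpowers y * zpowers x := by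
  have eq_of_mem_zpowers : ∀ {g h : G}, g * g = 1 → h ∈ zpowers g → h = 1 ∨ h = g := by
    rintro g h hg hh
    obtain ⟨k, rfl⟩ := mem_zpowers_iff.mp hh
    rw [zpow_eq_zpow_emod k (n := 2) (by rwa [zpow_two])]
    rcases Int.emod_two_eq k with hk | hk <;> simp [hk]
  intro h
  obtain ⟨b, hb, a, ha, hab⟩ : x * y ∈ (zpowers y : Set G) * zpowers x :=
    h ▸ Set.mul_mem_mul (mem_zpowers x) (mem_zpowers y)
  rcases eq_of_mem_zpowers hy hb with rfl | rfl <;> rcases eq_of_mem_zpowers hx ha with rfl | rfl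
  all_goals simp_all

end General

lemma ZMod.eq_zero_or_eq_one_of_two : ∀ x : ZMod 2, x = 0 ∨ x = 1 := by decide

lemma ZMod.natCast_add_natCast_self (n : ℕ) : (n : ZMod (2 * n)) + n = 0 := by
  rw [← Nat.cast_add, ← two_mul, ZMod.natCast_self]

lemma ZMod.eq_zero_or_eq_of_add_self_eq_zero {n : ℕ} [NeZero n] {y : ZMod (2 * n)}
    (h : y + y = 0) : y = 0 ∨ y = n := by
  have hdvd : 2 * n ∣ 2 * y.val := by
    rw [← ZMod.natCast_eq_zero_iff]
    push_cast [ZMod.natCast_val, ZMod.cast_id]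
    rwa [two_mul y]
  obtain ⟨k, hk⟩ := Nat.dvd_of_mul_dvd_mul_left two_pos hdvd
  have hk2 : k < 2 := by
    have := ZMod.val_lt y
    by_contra! hk2
    nlinarith [NeZero.pos n]
  rw [← ZMod.natCast_zmod_val y, hk]
  interval_cases k <;> simp

lemma ZMod.natCast_two_pow_mem_zmultiples {m : ℕ} {w : ZMod (2 * 2 ^ m)} (hw : w ≠ 0) :
    ((2 ^ m : ℕ) : ZMod (2 * 2 ^ m)) ∈ AddSubgroup.zmultiples w := by
  obtain ⟨j, -, hj⟩ : ∃ j ≤ m + 1, addOrderOf w = 2 ^ j :=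
    (Nat.dvd_prime_pow Nat.prime_two).mp
      (addOrderOf_dvd_card.trans (by rw [ZMod.card, pow_succ']))
  have hj0 : j ≠ 0 := by
    rintro rfl
    exact hw (AddMonoid.addOrderOf_eq_one_iff.mp hj)
  have hv : 2 ^ (j - 1) • w ≠ 0 :=
    nsmul_ne_zero_of_lt_addOrderOf (by positivity) (hj ▸ Nat.pow_lt_pow_right one_lt_two (by omega))
  have hvv : 2 ^ (j - 1) • w + 2 ^ (j - 1) • w = 0 := by
    rw [← add_nsmul, ← two_mul, ← pow_succ' 2 (j - 1),
      Nat.sub_add_cancel (Nat.one_le_iff_ne_zero.mpr hj0), ← hj, addOrderOf_nsmul_eq_zero]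
  rcases ZMod.eq_zero_or_eq_of_add_self_eq_zero hvv with h | h
  · exact absurd h hv
  · exact h ▸ AddSubgroup.nsmul_mem _ (AddSubgroup.mem_zmultiples w) _

/-- The central product `D₈ ∘ C₂ₙ` (the Pauli group for `n = 2`): `⟨c, a, b⟩` stands for
`ζ ^ c * x ^ a * y ^ b`, where `ζ` is central of order `2n` and `x`, `y` are involutions with
`y * x = ζ ^ n * x * y`. -/
@[ext]
structure Pauli (n : ℕ) where
  c : ZMod (2 * n)
  a : ZMod 2
  b : ZMod 2

namespace Pauli

variable {n : ℕ}

/-- `y ^ b * x ^ a = ζ ^ twist n b a * x ^ a * y ^ b`. -/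
def twist (n : ℕ) (b a : ZMod 2) : ZMod (2 * n) := if b = 1 ∧ a = 1 then n else 0

@[simp] lemma twist_zero_left (a : ZMod 2) : twist n 0 a = 0 := by simp [twist]

@[simp] lemma twist_zero_right (b : ZMod 2) : twist n b 0 = 0 := by simp [twist]

lemma twist_add_left (b b' a : ZMod 2) : twist n (b + b') a = twist n b a + twist n b' a := by
  rcases ZMod.eq_zero_or_eq_one_of_two b with rfl | rfl <;>
    rcases ZMod.eq_zero_or_eq_one_of_two b' with rfl | rfl <;>
    rcases ZMod.eq_zero_or_eq_one_of_two a with rfl | rfl <;>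
    simp [twist, ZMod.natCast_add_natCast_self]

lemma twist_add_right (b a a' : ZMod 2) : twist n b (a + a') = twist n b a + twist n b a' := by
  rcases ZMod.eq_zero_or_eq_one_of_two b with rfl | rfl <;>
    rcases ZMod.eq_zero_or_eq_one_of_two a with rfl | rfl <;>
    rcases ZMod.eq_zero_or_eq_one_of_two a' with rfl | rfl <;>
    simp [twist, ZMod.natCast_add_natCast_self]

lemma twist_add_self (b a : ZMod 2) : twist n b a + twist n b a = 0 := by
  rw [← twist_add_left, CharTwo.add_self_eq_zero, twist_zero_left]

lemma twist_eq_or (b a b' a' : ZMod 2) :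
    twist n b a' = twist n b' a ∨ twist n b a' = n + twist n b' a := by
  rcases ZMod.eq_zero_or_eq_one_of_two b with rfl | rfl <;>
    rcases ZMod.eq_zero_or_eq_one_of_two a with rfl | rfl <;>
    rcases ZMod.eq_zero_or_eq_one_of_two b' with rfl | rfl <;>
    rcases ZMod.eq_zero_or_eq_one_of_two a' with rfl | rfl <;>
    simp [twist, ZMod.natCast_add_natCast_self]

instance : Mul (Pauli n) := ⟨fun g h => ⟨g.c + h.c + twist n g.b h.a, g.a + h.a, g.b + h.b⟩⟩
instance : One (Pauli n) := ⟨⟨0, 0, 0⟩⟩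
instance : Inv (Pauli n) := ⟨fun g => ⟨-g.c + twist n g.b g.a, g.a, g.b⟩⟩

@[simp] lemma mul_c (g h : Pauli n) : (g * h).c = g.c + h.c + twist n g.b h.a := rfl
@[simp] lemma mul_a (g h : Pauli n) : (g * h).a = g.a + h.a := rfl
@[simp] lemma mul_b (g h : Pauli n) : (g * h).b = g.b + h.b := rfl
@[simp] lemma one_c : (1 : Pauli n).c = 0 := rfl
@[simp] lemma one_a : (1 : Pauli n).a = 0 := rfl
@[simp] lemma one_b : (1 : Pauli n).b = 0 := rfl
@[simp] lemma inv_c (g : Pauli n) : g⁻¹.c = -g.c + twist n g.b g.a := rfl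
@[simp] lemma inv_a (g : Pauli n) : g⁻¹.a = g.a := rfl
@[simp] lemma inv_b (g : Pauli n) : g⁻¹.b = g.b := rfl

instance : Group (Pauli n) where
  mul_assoc g h k := by
    ext <;> simp only [mul_c, mul_a, mul_b, twist_add_left, twist_add_right] <;> ring
  one_mul g := by ext <;> simp
  mul_one g := by ext <;> simp
  inv_mul_cancel g := by ext <;> simp [twist_add_self, CharTwo.add_self_eq_zero]

instance [NeZero n] : Finite (Pauli n) :=
  Finite.of_injective (fun g : Pauli n => (g.c, g.a, g.b)) fun g h e => by
    simp only [Prod.mk.injEq] at e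
    exact Pauli.ext e.1 e.2.1 e.2.2

def ofCyclic : Multiplicative (ZMod (2 * n)) →* Pauli n where
  toFun w := ⟨w.toAdd, 0, 0⟩
  map_one' := rfl
  map_mul' v w := by ext <;> simp

lemma ofCyclic_injective : Function.Injective (ofCyclic (n := n)) :=
  fun _ _ h => congrArg Pauli.c h

def z (n : ℕ) : Pauli n := ofCyclic (.ofAdd n)

lemma mul_comm_or (g h : Pauli n) : g * h = h * g ∨ g * h = z n * (h * g) := by
  rcases twist_eq_or (n := n) g.b g.a h.b h.a with e | e
  · left; ext <;> simp [e, add_comm]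
  · right; ext <;> simp [z, ofCyclic, e] <;> ring

lemma normal_of_z_mem {H : Subgroup (Pauli n)} (hz : z n ∈ H) : H.Normal where
  conj_mem h hh g := by
    rcases mul_comm_or g h with e | e
    · simpa [e] using hh
    · simpa [e, mul_assoc] using H.mul_mem hz hh

lemma mul_self_eq_ofCyclic (g : Pauli n) :
    g * g = ofCyclic (.ofAdd (g.c + g.c + twist n g.b g.a)) := by
  ext <;> simp [ofCyclic, CharTwo.add_self_eq_zero]

lemma z_mem_zpowers {m : ℕ} {g : Pauli (2 ^ m)} (hg : g * g ≠ 1) : z (2 ^ m) ∈ zpowers g := by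
  set w := g.c + g.c + twist (2 ^ m) g.b g.a
  have hsq : g * g = ofCyclic (.ofAdd w) := mul_self_eq_ofCyclic g
  have hw : w ≠ 0 := fun h => hg (by rw [hsq, h, ofAdd_zero, map_one])
  obtain ⟨k, hk⟩ := AddSubgroup.mem_zmultiples_iff.mp (ZMod.natCast_two_pow_mem_zmultiples hw)
  have hz : z (2 ^ m) = (g * g) ^ k := by rw [z, ← hk, ofAdd_zsmul, map_zpow, hsq]
  rw [hz]
  exact zpow_mem (mul_mem (mem_zpowers g) (mem_zpowers g)) k

lemma eq_or_eq_z_mul [NeZero n] {g h : Pauli n} (hg : g * g = 1) (hh : h * h = 1)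
    (ha : h.a = g.a) (hb : h.b = g.b) : h = g ∨ h = z n * g := by
  have hd : (h.c - g.c) + (h.c - g.c) = 0 := by
    have := congrArg Pauli.c (hg.trans hh.symm)
    simp only [mul_c, ha, hb] at this
    linear_combination -this
  rcases ZMod.eq_zero_or_eq_of_add_self_eq_zero hd with e | e
  · left; ext <;> simp [ha, hb, sub_eq_zero.mp e]
  · right; ext <;> simp [z, ofCyclic, ha, hb, ← e]

lemma ncard_mul_self_eq_one_le [NeZero n] : {g : Pauli n | g * g = 1}.ncard ≤ 8 := by
  classical
  have := Fintype.ofFinite (Pauli n)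
  rw [Set.ncard_eq_toFinset_card']
  set s := {g : Pauli n | g * g = 1}.toFinset
  calc s.card ≤ 2 * (s.image fun g => (g.a, g.b)).card :=
        Finset.card_le_mul_card_image s 2 fun p hp => ?_
    _ ≤ 2 * 4 := by
        gcongr
        exact (Finset.card_le_univ _).trans (by simp)
  obtain ⟨g, hg, rfl⟩ := Finset.mem_image.mp hp
  refine (Finset.card_le_card fun h hh => ?_).trans (Finset.card_le_two (a := g) (b := z n * g))
  simp only [Finset.mem_filter, Set.mem_toFinset, Prod.mk.injEq, s] at hh hg
  simpa using eq_or_eq_z_mul hg hh.1 hh.2.1 hh.2.2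

lemma ncard_nonnormal_cyclic_le (m : ℕ) :
    {H : Subgroup (Pauli (2 ^ m)) | IsCyclic H ∧ ¬ H.Normal}.ncard ≤ 8 := by
  calc _ ≤ (zpowers '' {g : Pauli (2 ^ m) | g * g = 1}).ncard := Set.ncard_le_ncard ?_
    _ ≤ {g : Pauli (2 ^ m) | g * g = 1}.ncard := Set.ncard_image_le (Set.toFinite _)
    _ ≤ 8 := ncard_mul_self_eq_one_le
  rintro H ⟨hH, hN⟩
  obtain ⟨g, rfl⟩ := (H.isCyclic_iff_exists_zpowers_eq_top).mp hH
  by_contra hg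
  exact hN (normal_of_z_mem (z_mem_zpowers fun h => hg ⟨g, h, rfl⟩))

lemma le_card_cyclic (m : ℕ) :
    m + 2 ≤ Nat.card {H : Subgroup (Pauli (2 ^ m)) // IsCyclic H} := by
  have hord : orderOf (ofCyclic (.ofAdd (1 : ZMod (2 * 2 ^ m)))) = 2 ^ (m + 1) := by
    rw [orderOf_injective _ ofCyclic_injective, orderOf_ofAdd_eq_addOrderOf, ZMod.addOrderOf_one,
      pow_succ']
  have := card_divisors_orderOf_le_card_cyclic (ofCyclic (.ofAdd (1 : ZMod (2 * 2 ^ m))))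
  rwa [hord, Nat.divisors_prime_pow Nat.prime_two, Finset.card_map, Finset.card_range] at this

def x (n : ℕ) : Pauli n := ⟨0, 1, 0⟩

def y (n : ℕ) : Pauli n := ⟨0, 0, 1⟩

lemma x_mul_x : x n * x n = 1 := by ext <;> simp [x, CharTwo.add_self_eq_zero]

lemma y_mul_y : y n * y n = 1 := by ext <;> simp [y, CharTwo.add_self_eq_zero]

lemma x_mul_y_ne [NeZero n] : x n * y n ≠ y n * x n := by
  intro h
  have : ((n : ℕ) : ZMod (2 * n)) = 0 := by simpa [x, y, twist, eq_comm] using congrArg Pauli.c h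
  rw [ZMod.natCast_eq_zero_iff] at this
  exact NeZero.ne n (Nat.eq_zero_of_dvd_of_lt this (by linarith [NeZero.pos n]))

lemma one_sub_le_csd (m : ℕ) : 1 - (8 / (m + 2) : ℚ) ^ 2 ≤ csd (Pauli (2 ^ m)) := by
  refine le_trans ?_ one_sub_sq_le_csd
  gcongr
  · exact_mod_cast ncard_nonnormal_cyclic_le m
  · exact_mod_cast le_card_cyclic m

end Pauli

theorem stmt_17_general (c : ℚ) (hc1 : c < 1) :
    ∃ (G : Type) (_ : Group G) (_ : Fintype G), csd G > c ∧
      ∃ H K : Subgroup G, (H : Set G) * (K : Set G) ≠ (K : Set G) * (H : Set G) := by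
  obtain ⟨m, hm⟩ := exists_nat_gt (64 / (1 - c))
  refine ⟨Pauli (2 ^ m), inferInstance, Fintype.ofFinite _, ?_, _, _,
    zpowers_mul_zpowers_ne Pauli.x_mul_x Pauli.y_mul_y Pauli.x_mul_y_ne⟩
  refine lt_of_lt_of_le ?_ (Pauli.one_sub_le_csd m)
  have h1c : 0 < 1 - c := sub_pos.mpr hc1
  have hm2 : 64 < (1 - c) * (m + 2) ^ 2 := by
    rw [div_lt_iff₀ h1c] at hm
    nlinarith
  rw [div_pow, lt_sub_comm, div_lt_iff₀ (by positivity)]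
  linarith

theorem stmt_17 (c : ℚ) (hc0 : 0 < c) (hc1 : c < 1) :
    ∃ (G : Type) (_ : Group G) (_ : Fintype G), csd G > c ∧
      ∃ H K : Subgroup G, (H : Set G) * (K : Set G) ≠ (K : Set G) * (H : Set G) :=
  stmt_17_general c hc1
end
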